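/- arXiv:1211.6700 — 10 statements merged into one kernel-verified Lean document; each statement's English description precedes it below -/
import Mathlib

section
/- Let G = A *_C B be an amalgamated free product of groups A and B over a common subgroup C. Then any product of elements whose successive terms lie alternately in A \ C and B \ C lies outside of C. -/
open Monoid PushoutI

namespace Monoid.PushoutI

variable {ι H : Type*} {G : ι → Type*} [Group H] [∀ i, Group (G i)] {φ : ∀ i, H →* G i}

theorem notMem_range_of_of_notMem_range_base {i : ι} {g : G i}
    (h : of (φ := φ) i g ∉ Set.range (base φ)) : g ∉ (φ i).range := by
  rintro ⟨x, rfl⟩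
  exact h ⟨x, (of_apply_eq_base φ i x).symm⟩

theorem prod_map_of_notMem_range_base (hφ : ∀ i, Function.Injective (φ i))
    {l : List (Σ i, G i)} (hl : l ≠ []) (hchain : l.IsChain fun a b => a.1 ≠ b.1)
    (hred : ∀ x ∈ l, x.2 ∉ (φ x.1).range) :
    (l.map fun x => of (φ := φ) x.1 x.2).prod ∉ Set.range (base φ) := by
  let w : CoprodI.Word G := ⟨l, fun x hx h1 => hred x hx (h1 ▸ one_mem _), hchain⟩
  have hprod : ofCoprodI w.prod = (l.map fun x => of (φ := φ) x.1 x.2).prod := by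
    simp [w, CoprodI.Word.prod, map_list_prod, Function.comp_def, ofCoprodI_of]
  intro hmem
  have hw : w = .empty := Reduced.eq_empty_of_mem_range hφ hred (hprod ▸ hmem)
  exact hl (congrArg CoprodI.Word.toList hw)

end Monoid.PushoutI

/-- Let `G = A *_C B` be an amalgamated free product of the groups
`A = G true` and `B = G false` over a common subgroup `C` (embedded by the injective maps
`φ i`).  Any nonempty product of elements whose successive terms lie alternately in
`A \ C` and `B \ C` lies outside of `C` (all identified with their images in `G`). -/
theorem stmt_0 {C : Type*} {G : Bool → Type*} [Group C] [∀ i, Group (G i)]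
    (φ : ∀ i, C →* G i) (hφ : ∀ i, Function.Injective (φ i))
    (L : List (PushoutI φ)) (c : List Bool) (hne : L ≠ [])
    (hlen : L.length = c.length) (halt : c.Chain' (· ≠ ·))
    (hmem : ∀ k : Fin L.length,
      L.get k ∈ Set.range (of (φ := φ) (c.get (Fin.cast hlen k))) \
        Set.range (base φ)) :
    L.prod ∉ Set.range (base φ) := by
  choose g hg using fun k => (hmem k).1
  set l : List (Σ i, G i) := List.ofFn fun k => ⟨c.get (Fin.cast hlen k), g k⟩
  have hfst : l.map Sigma.fst = c := by
    apply List.ext_get <;> simp [l, hlen]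
  have hL : l.map (fun x => of (φ := φ) x.1 x.2) = L := by
    simp only [l, List.map_ofFn, Function.comp_def, hg]
    exact List.ofFn_get L
  rw [← hL]
  refine prod_map_of_notMem_range_base hφ (by simpa [l] using hne) ?_ ?_
  · rwa [← List.isChain_map Sigma.fst, hfst]
  · simp only [l, List.mem_ofFn, forall_exists_index]
    rintro _ k rfl
    exact notMem_range_of_of_notMem_range_base (hg k ▸ (hmem k).2)
end

section
/- Let G be a group acting on a tree T (simplicially, without inversions). If P is a finite p-subgroup of G and all vertex stabilizers of the action are finite groups, with a vertex v_* such that for every vertex v the edge group on the path toward v_* has p'-index in the stabilizer of v (the setup of a tree of finite groups satisfying hypothesis (H)), then some conjugate of P lies in the stabilizer of v_*. Consequently, a Sylow p-subgroup of the stabilizer of v_* is a Sylow p-subgroup of the fundamental group of the tree of groups. -/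
/-!
A finite `p`-group `P` fixes a vertex of the tree. Being nilpotent, `P` satisfies the normalizer
condition, so a maximal subgroup `K ≤ P` fixing some vertex is, if proper, strictly contained in
its normalizer. An element `t` of the normalizer preserves the fixed subtree of `K`, and an
automorphism of finite order without inversions fixes a vertex of every subtree it preserves:
take a vertex `v` of the subtree with minimal displacement `d(v, t v) > 0` and the geodesic
`γ = [v, t v]`. If `t` maps the second vertex of `γ` to its penultimate one, then either `γ` is an
inverted edge or that second vertex has smaller displacement; otherwise the translates
`γ, t γ, t² γ, …` line up into geodesics `[v, tᵏ v]` of length `k d(v, t v)`, contradicting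
`tⁿ = 1`. So `K` and `t` fix a common vertex, contradicting maximality.

From a vertex fixed by `P` one walks toward `v⋆`. At each step `P` (conjugated into `Stab(v)`)
acts on the cosets of the edge group in `Stab(v)`, a set of size prime to `p`, so it fixes a
coset, which conjugates `P` into the stabilizer of the next vertex. The same coset argument
inside `Stab(v⋆)` gives the Sylow statement.
-/

namespace SimpleGraph

variable {V : Type*} {T : SimpleGraph V}

def IsConvex (T : SimpleGraph V) (S : Set V) : Prop :=
  ∀ ⦃u v : V⦄, u ∈ S → v ∈ S → ∀ p : T.Walk u v, p.IsPath → ∀ i, p.getVert i ∈ S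

namespace Walk

lemma dist_getVert_le {u v : V} (p : T.Walk u v) {i j : ℕ} (hij : i ≤ j) :
    T.dist (p.getVert i) (p.getVert j) ≤ j - i := by
  calc T.dist (p.getVert i) (p.getVert j)
      = T.dist (p.getVert i) ((p.drop i).getVert (j - i)) := by
        rw [drop_getVert, Nat.add_sub_cancel' hij]
    _ ≤ ((p.drop i).take (j - i)).length := dist_le _
    _ ≤ j - i := by simp

lemma snd_append {u v w : V} {p : T.Walk u v} (hp : ¬p.Nil) (q : T.Walk v w) :
    (p.append q).snd = p.snd := by
  cases p with
  | nil => simp at hp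
  | cons h p => simp

end Walk

lemma IsAcyclic.isPath_append (hT : T.IsAcyclic) {u a w : V} {p : T.Walk u a}
    {q : T.Walk a w} (hp : p.IsPath) (hq : q.IsPath) (hpq : p.penultimate ≠ q.snd) :
    (p.append q).IsPath := by
  classical
  have hmeet : ∀ z ∈ p.reverse.support, z ∈ q.support → z = a := by
    intro z hzp hzq
    by_contra hza
    have := Subtype.ext_iff.mp <| (hT.subsingleton_path a z).elim
      ⟨_, hp.reverse.takeUntil hzp⟩ ⟨_, hq.takeUntil hzq⟩
    apply hpq
    rw [← Walk.snd_reverse, ← Walk.snd_takeUntil hza _ hzp, ← Walk.snd_takeUntil hza _ hzq]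
    exact congrArg Walk.snd this
  rw [Walk.isPath_def, Walk.support_append]
  refine List.Nodup.append hp.support_nodup hq.support_nodup.tail fun z hzp hzq => ?_
  obtain rfl := hmeet z (by simpa using hzp) (List.mem_of_mem_tail hzq)
  have hnodup := hq.support_nodup
  rw [← q.cons_tail_support] at hnodup
  exact (List.nodup_cons.mp hnodup).1 hzq

end SimpleGraph

open SimpleGraph MulAction

section TreeAction

variable {V H : Type*} {T : SimpleGraph V} [Group H] [MulAction H V]

def smulGraphHom (hact : ∀ (g : H) (u v : V), T.Adj u v → T.Adj (g • u) (g • v)) (g : H) :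
    T →g T :=
  ⟨(g • ·), hact g _ _⟩

@[simp]
lemma smulGraphHom_apply (hact : ∀ (g : H) (u v : V), T.Adj u v → T.Adj (g • u) (g • v))
    (g : H) (v : V) : smulGraphHom hact g v = g • v :=
  rfl

lemma isConvex_setOf_le_stabilizer (hT : T.IsAcyclic)
    (hact : ∀ (g : H) (u v : V), T.Adj u v → T.Adj (g • u) (g • v)) (K : Subgroup H) :
    T.IsConvex {v | K ≤ stabilizer H v} := by
  intro u v hu hv p hp i x hx
  have hpx : ((p.map (smulGraphHom hact x)).copy ((smulGraphHom_apply hact x u).trans (hu hx))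
      ((smulGraphHom_apply hact x v).trans (hv hx))).IsPath := by
    rw [Walk.isPath_copy]
    exact hp.map (MulAction.injective x)
  have := Subtype.ext_iff.mp <| (hT.subsingleton_path u v).elim ⟨_, hpx⟩ ⟨p, hp⟩
  have := congrArg (Walk.getVert · i) this
  rwa [Walk.getVert_copy, Walk.getVert_map, smulGraphHom_apply] at this

lemma le_stabilizer_smul_of_mem_normalizer {K : Subgroup H} {t : H}
    (ht : t ∈ Subgroup.normalizer (K : Set H)) {v : V} (hv : K ≤ stabilizer H v) :
    K ≤ stabilizer H (t • v) := by
  intro x hx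
  have : t⁻¹ * x * t ∈ stabilizer H v := hv ((Subgroup.mem_normalizer_iff''.mp ht x).mp hx)
  calc x • t • v = t • (t⁻¹ * x * t) • v := by simp [smul_smul, mul_assoc]
    _ = t • v := congrArg (t • ·) this

theorem exists_isPath_pow_smul (hT : T.IsAcyclic)
    (hact : ∀ (g : H) (u v : V), T.Adj u v → T.Adj (g • u) (g • v))
    {t : H} {v : V} {γ : T.Walk v (t • v)} (hγ : γ.IsPath) (hne : ¬γ.Nil)
    (hfold : γ.penultimate ≠ t • γ.snd) (k : ℕ) :
    ∃ ρ : T.Walk v (t ^ (k + 1) • v), ρ.IsPath ∧ ρ.length = (k + 1) * γ.length ∧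
      ρ.snd = γ.snd := by
  induction k with
  | zero => exact ⟨γ.copy rfl (by rw [zero_add, pow_one]), by simpa using hγ, by simp, by simp⟩
  | succ k ih =>
    obtain ⟨ρ, hρ, hρlen, hρsnd⟩ := ih
    let tρ : T.Walk (t • v) (t ^ (k + 1 + 1) • v) :=
      (ρ.map (smulGraphHom hact t)).copy (smulGraphHom_apply hact t v)
        (by rw [smulGraphHom_apply, smul_smul, ← pow_succ'])
    have htρ : tρ.IsPath := by
      rw [Walk.isPath_copy]
      exact hρ.map (MulAction.injective t)
    have htρsnd : tρ.snd = t • γ.snd := by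
      rw [← hρsnd]
      show tρ.getVert 1 = _
      rw [Walk.getVert_copy, Walk.getVert_map, smulGraphHom_apply]
    refine ⟨γ.append tρ, hT.isPath_append hγ htρ (htρsnd ▸ hfold), ?_, Walk.snd_append hne _⟩
    simp only [Walk.length_append, tρ, Walk.length_copy, Walk.length_map, hρlen]
    ring

theorem exists_mem_smul_eq_self_of_isConvex (hT : T.IsTree)
    (hact : ∀ (g : H) (u v : V), T.Adj u v → T.Adj (g • u) (g • v))
    (hnoinv : ∀ (g : H) (u v : V), T.Adj u v → g • u = v → g • v ≠ u)
    {S : Set V} (hS : S.Nonempty) (hSconv : T.IsConvex S) {t : H} (htS : ∀ v ∈ S, t • v ∈ S)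
    (ht : IsOfFinOrder t) : ∃ v ∈ S, t • v = v := by
  set v := Function.argminOn (fun v => T.dist v (t • v)) S hS
  have hvS : v ∈ S := Function.argminOn_mem _ S hS
  have hmin : ∀ u ∈ S, T.dist v (t • v) ≤ T.dist u (t • u) :=
    fun u hu => Function.argminOn_le (fun v => T.dist v (t • v)) S hu
  by_contra! hfix
  obtain ⟨γ, hγ, hγlen⟩ := hT.connected.exists_path_of_dist v (t • v)
  have hne : ¬γ.Nil := fun h => hfix v hvS h.eq.symm
  have hlen : 0 < γ.length := Walk.not_nil_iff_lt_length.mp hne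
  have hbS : γ.snd ∈ S := hSconv hvS (htS v hvS) γ hγ 1
  by_cases hfold : γ.penultimate = t • γ.snd
  · obtain hlen1 | hlen2 : γ.length = 1 ∨ 1 < γ.length := by omega
    · have hsnd : γ.snd = t • v := by
        rw [Walk.snd, ← hlen1, Walk.getVert_length]
      apply hnoinv t v γ.snd (γ.adj_snd hne) hsnd.symm
      rw [← hfold, Walk.penultimate, hlen1, Nat.sub_self, Walk.getVert_zero]
    · have hshort : T.dist γ.snd (t • γ.snd) < T.dist v (t • v) := by
        calc T.dist γ.snd (t • γ.snd) = T.dist (γ.getVert 1) (γ.getVert (γ.length - 1)) := by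
              rw [← hfold]
          _ ≤ γ.length - 1 - 1 := γ.dist_getVert_le (by omega)
          _ < T.dist v (t • v) := by omega
      exact absurd hshort (not_lt.mpr (hmin _ hbS))
  · obtain ⟨n, hn, htn⟩ := ht.exists_pow_eq_one
    obtain ⟨ρ, hρ, hρlen, -⟩ := exists_isPath_pow_smul hT.isAcyclic hact hγ hne hfold (n - 1)
    have hloop : t ^ (n - 1 + 1) • v = v := by rw [Nat.sub_add_cancel hn, htn, one_smul]
    have := Walk.length_eq_zero_iff.mpr
      (Walk.isPath_iff_nil.mp ((Walk.isPath_copy _ rfl hloop).mpr hρ))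
    rw [Walk.length_copy, hρlen] at this
    exact Nat.mul_ne_zero (Nat.succ_ne_zero _) (by omega) this

theorem exists_forall_smul_eq_self_of_isNilpotent (hT : T.IsTree)
    (hact : ∀ (g : H) (u v : V), T.Adj u v → T.Adj (g • u) (g • v))
    (hnoinv : ∀ (g : H) (u v : V), T.Adj u v → g • u = v → g • v ≠ u)
    [Finite H] [Group.IsNilpotent H] : ∃ v : V, ∀ h : H, h • v = v := by
  obtain ⟨K, ⟨v₀, hKv₀⟩, hmax⟩ :=
    (Set.toFinite {K : Subgroup H | ∃ v, K ≤ stabilizer H v}).exists_maximal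
      ⟨⊥, hT.connected.nonempty.some, bot_le⟩
  suffices hK : K = ⊤ from ⟨v₀, fun h => hKv₀ (hK ▸ Subgroup.mem_top h)⟩
  by_contra hKtop
  obtain ⟨t, htN, htK⟩ := SetLike.exists_of_lt
    (Group.normalizerCondition_of_isNilpotent K (lt_top_iff_ne_top.mpr hKtop))
  obtain ⟨v, hvS, htv⟩ := exists_mem_smul_eq_self_of_isConvex hT hact hnoinv ⟨v₀, hKv₀⟩
    (isConvex_setOf_le_stabilizer hT.isAcyclic hact K)
    (fun _ => le_stabilizer_smul_of_mem_normalizer htN) (isOfFinOrder_of_finite t)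
  have hle : K ⊔ Subgroup.zpowers t ≤ stabilizer H v :=
    sup_le hvS (Subgroup.zpowers_le.mpr htv)
  exact htK (hmax ⟨v, hle⟩ le_sup_left (Subgroup.mem_sup_right (Subgroup.mem_zpowers t)))

end TreeAction

theorem IsPGroup.exists_conj_mem_of_not_dvd_relIndex {G : Type*} [Group G] {p : ℕ}
    [Fact p.Prime] {P H K : Subgroup G} (hP : IsPGroup p P) (hHK : ¬p ∣ H.relIndex K)
    {g : G} (hg : ∀ x ∈ P, g⁻¹ * x * g ∈ K) :
    ∃ k ∈ K, ∀ x ∈ P, (g * k)⁻¹ * x * (g * k) ∈ H := by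
  let φ : P →* K := ((MulAut.conj g⁻¹).toMonoidHom.comp P.subtype).codRestrict K
    fun x => by simpa [MulAut.conj_apply] using hg x x.2
  let _ : MulAction P (K ⧸ H.subgroupOf K) := MulAction.compHom _ φ
  obtain ⟨q, hq⟩ := hP.nonempty_fixed_point_of_prime_not_dvd_card _ hHK
  obtain ⟨k, rfl⟩ := QuotientGroup.mk_surjective q
  refine ⟨k, k.2, fun x hx => ?_⟩
  have := QuotientGroup.eq.mp (hq ⟨x, hx⟩).symm
  rw [Subgroup.mem_subgroupOf] at this
  convert this using 1
  simp [φ]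
  group

theorem exists_conj_mem_stabilizer_of_conj_mem_stabilizer {V G : Type*} {T : SimpleGraph V}
    [Group G] [MulAction G V] {p : ℕ} [Fact p.Prime] {vstar : V}
    (hH : ∀ v : V, v ≠ vstar → ∃ w : V, T.dist w vstar + 1 = T.dist v vstar ∧
      ¬ p ∣ (stabilizer G w).relIndex (stabilizer G v))
    {P : Subgroup G} (hP : IsPGroup p P) (v : V) {g : G}
    (hg : ∀ x ∈ P, g⁻¹ * x * g ∈ stabilizer G v) :
    ∃ g' : G, ∀ x ∈ P, g'⁻¹ * x * g' ∈ stabilizer G vstar := by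
  induction hd : T.dist v vstar using Nat.strong_induction_on generalizing v g with
  | _ n ih =>
    by_cases hv : v = vstar
    · exact ⟨g, hv ▸ hg⟩
    obtain ⟨w, hw, hindex⟩ := hH v hv
    obtain ⟨k, -, hk⟩ := hP.exists_conj_mem_of_not_dvd_relIndex hindex hg
    exact ih _ (by omega) w hk rfl

/-- Let `G` be a group acting simplicially and without inversions on a
tree `T`, with all vertex stabilizers finite, and suppose there is a vertex `v⋆` such
that for every vertex `v ≠ v⋆`, the edge group of the first edge `(v, w)` on the path
from `v` toward `v⋆` (the stabilizer of the edge, i.e. `Stab(v) ⊓ Stab(w)`) has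
`p'`-index in `Stab(v)` — the setting of a tree of finite groups satisfying hypothesis
`(H)`, acting on its Bass–Serre tree.  Then every finite `p`-subgroup `P` of `G` has a
conjugate inside `Stab(v⋆)`; consequently (the image of) any Sylow `p`-subgroup of
`Stab(v⋆)` is a Sylow `p`-subgroup of `G`: every finite `p`-subgroup of `G` is conjugate
into it. -/
theorem stmt_3 {V : Type*} (T : SimpleGraph V) (hT : T.IsTree)
    (G : Type*) [Group G] [MulAction G V]
    (hact : ∀ (g : G) (u v : V), T.Adj u v → T.Adj (g • u) (g • v))
    (hnoinv : ∀ (g : G) (u v : V), T.Adj u v → g • u = v → g • v ≠ u)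
    (hfin : ∀ v : V, Finite (MulAction.stabilizer G v))
    (p : ℕ) [Fact p.Prime] (vstar : V)
    (hH : ∀ v : V, v ≠ vstar → ∃ w : V, T.Adj v w ∧ T.dist w vstar + 1 = T.dist v vstar ∧
      ¬ p ∣ (MulAction.stabilizer G w).relIndex (MulAction.stabilizer G v)) :
    (∀ P : Subgroup G, Finite P → IsPGroup p P →
      ∃ g : G, ∀ x ∈ P, g⁻¹ * x * g ∈ MulAction.stabilizer G vstar) ∧
    (∀ S : Sylow p ↥(MulAction.stabilizer G vstar),
      ∀ P : Subgroup G, Finite P → IsPGroup p P →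
        ∃ g : G, ∀ x ∈ P, g⁻¹ * x * g ∈
          (S : Subgroup ↥(MulAction.stabilizer G vstar)).map
            (MulAction.stabilizer G vstar).subtype) := by
  have conj_into_stabilizer : ∀ P : Subgroup G, Finite P → IsPGroup p P →
      ∃ g : G, ∀ x ∈ P, g⁻¹ * x * g ∈ stabilizer G vstar := by
    intro P _ hP
    have := hP.isNilpotent
    obtain ⟨v, hv⟩ := exists_forall_smul_eq_self_of_isNilpotent (H := P) hT
      (fun x => hact x) (fun x => hnoinv x)
    exact exists_conj_mem_stabilizer_of_conj_mem_stabilizer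
      (fun v hv => (hH v hv).imp fun _ => And.right) hP v (g := 1)
      fun x hx => by simpa using hv ⟨x, hx⟩
  refine ⟨conj_into_stabilizer, fun S P hPfin hP => ?_⟩
  obtain ⟨g, hg⟩ := conj_into_stabilizer P hPfin hP
  have := hfin vstar
  have hS : ¬p ∣ ((S : Subgroup (stabilizer G vstar)).map (stabilizer G vstar).subtype).relIndex
      (stabilizer G vstar) := by
    rw [Subgroup.relIndex, Subgroup.subgroupOf,
      Subgroup.comap_map_eq_self_of_injective (Subgroup.subtype_injective _)]
    exact S.not_dvd_index
  obtain ⟨k, -, hk⟩ := hP.exists_conj_mem_of_not_dvd_relIndex hS hg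
  exact ⟨g * k, hk⟩
end

section
/- Let G = A *_C B be an amalgamated free product of finite groups with C = S a common Sylow p-subgroup of both A and B (so p ∤ |A : S| and p ∤ |B : S|). Then S is a Sylow p-subgroup of G, i.e., every finite p-subgroup of G is conjugate to a subgroup of S. -/
/-!
`G` acts on its Bass–Serre tree, whose vertices are the cosets of `A` and of `B` and whose edges
are the cosets of `S`. Reduced words in the normal form of the amalgam give every vertex other than
`A` a parent one step closer to `A`, joined to it by an edge, so the tree is presented by its
parent map. A finite `p`-group `P ≤ G` fixes a vertex: the union of the paths from the `P`-orbit
of the root to the root is a finite `P`-invariant subtree, with one vertex more than edges, so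
counting fixed points modulo `p` yields a fixed vertex or a fixed edge, whose ends are fixed.
Hence `P` is conjugate into `A` or `B`, and by Sylow's theorem in that factor into `S`.
-/

open Monoid PushoutI

theorem IsPGroup.exists_fixed_or_exists_fixed_of_card_eq_add_one {p : ℕ} [Fact p.Prime]
    {Γ : Type*} [Group Γ] (hΓ : IsPGroup p Γ) {X Y : Type*} [MulAction Γ X] [MulAction Γ Y]
    [Finite X] [Finite Y] (hcard : Nat.card X = Nat.card Y + 1) :
    (∃ x : X, ∀ g : Γ, g • x = x) ∨ ∃ y : Y, ∀ g : Γ, g • y = y := by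
  refine or_iff_not_imp_left.2 fun hX => ?_
  have hfix : MulAction.fixedPoints Γ X = ∅ :=
    Set.eq_empty_of_forall_notMem fun x hx => hX ⟨x, hx⟩
  have hpX : p ∣ Nat.card X := Nat.modEq_zero_iff_dvd.1
    ((hΓ.card_modEq_card_fixedPoints X).trans (by simp [hfix, Nat.ModEq]))
  obtain ⟨y, hy⟩ := hΓ.nonempty_fixed_point_of_prime_not_dvd_card Y fun hpY =>
    (Fact.out : p.Prime).not_dvd_one ((Nat.dvd_add_right hpY).1 (hcard ▸ hpX))
  exact ⟨y, hy⟩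

theorem IsPGroup.exists_conj_mem_of_not_dvd_index {p : ℕ} [Fact p.Prime] {A : Type*} [Group A]
    [Finite A] {S Q : Subgroup A} (hS : IsPGroup p S) (hSi : ¬ p ∣ S.index) (hQ : IsPGroup p Q) :
    ∃ a : A, ∀ q ∈ Q, a⁻¹ * q * a ∈ S := by
  obtain ⟨R, hQR⟩ := hQ.exists_le_sylow
  obtain ⟨a, rfl⟩ := MulAction.exists_smul_eq A (hS.toSylow hSi) R
  refine ⟨a, fun q hq => ?_⟩
  have := hQR hq
  rw [Sylow.coe_subgroup_smul, Subgroup.mem_pointwise_smul_iff_inv_smul_mem] at this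
  simpa [MulAut.conj_apply, mul_assoc] using this

/-- A tree with vertex set `V` and edge set `E`, the edge `e` joining `ends true e` and
`ends false e`, presented by the path from each vertex towards a root: every vertex `v ≠ root`
is joined by `parentEdge v` to `parent v`, which is one step closer to the root, and every edge
arises in this way. -/
structure ParentTree (V E : Type*) where
  ends : Bool → E → V
  root : V
  parent : V → V
  parentEdge : V → E
  depth : V → ℕ
  depth_eq_zero_iff : ∀ v, depth v = 0 ↔ v = root
  depth_parent : ∀ v, v ≠ root → depth (parent v) + 1 = depth v
  ends_parentEdge : ∀ v, v ≠ root →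
    ∃ i, ends i (parentEdge v) = v ∧ ends (!i) (parentEdge v) = parent v
  exists_parentEdge_eq : ∀ e, ∃ v, v ≠ root ∧ parentEdge v = e

namespace ParentTree

variable {V E : Type*} (T : ParentTree V E)

def Adj (u v : V) : Prop := ∃ e i, T.ends i e = u ∧ T.ends (!i) e = v

def IsParent (u v : V) : Prop := v ≠ T.root ∧ T.parent v = u

variable {T}

theorem Adj.isParent_or {u v : V} (h : T.Adj u v) : T.IsParent u v ∨ T.IsParent v u := by
  obtain ⟨e, i, rfl, rfl⟩ := h
  obtain ⟨w, hw, rfl⟩ := T.exists_parentEdge_eq e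
  obtain ⟨j, hj, hj'⟩ := T.ends_parentEdge w hw
  cases i <;> cases j <;> simp_all [IsParent]

theorem IsParent.adj {u v : V} (h : T.IsParent u v) : T.Adj v u := by
  obtain ⟨i, hi, hi'⟩ := T.ends_parentEdge v h.1
  exact ⟨_, i, hi, hi'.trans h.2⟩

theorem ne_root_of_depth_pos {v : V} (h : 0 < T.depth v) : v ≠ T.root :=
  fun hv => h.ne' ((T.depth_eq_zero_iff v).2 hv)

theorem depth_iterate_parent (v : V) {k : ℕ} (hk : k ≤ T.depth v) :
    T.depth (T.parent^[k] v) = T.depth v - k := by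
  induction k with
  | zero => rfl
  | succ k ih =>
    have hpos : 0 < T.depth (T.parent^[k] v) := by rw [ih (by omega)]; omega
    have := T.depth_parent _ (ne_root_of_depth_pos hpos)
    rw [Function.iterate_succ_apply']
    omega

theorem iterate_parent_depth (v : V) : T.parent^[T.depth v] v = T.root :=
  (T.depth_eq_zero_iff _).1 (by rw [depth_iterate_parent v le_rfl, Nat.sub_self])

theorem parentEdge_injOn : Set.InjOn T.parentEdge {v | v ≠ T.root} := by
  intro v hv w hw h
  obtain ⟨i, hvi, hvi'⟩ := T.ends_parentEdge v hv
  obtain ⟨j, hwj, hwj'⟩ := T.ends_parentEdge w hw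
  have dv := T.depth_parent v hv
  have dw := T.depth_parent w hw
  rw [h] at hvi hvi'
  cases i <;> cases j <;> simp_all <;> omega

variable (T)

def anc (v : V) : Set V := (fun k => T.parent^[k] v) '' Set.Iic (T.depth v)

theorem anc_finite (v : V) : (T.anc v).Finite := (Set.finite_Iic _).image _

theorem mem_anc_self (v : V) : v ∈ T.anc v := ⟨0, Nat.zero_le _, rfl⟩

variable {T}

theorem parent_mem_anc {u v : V} (hu : u ∈ T.anc v) (hur : u ≠ T.root) :
    T.parent u ∈ T.anc v := by
  obtain ⟨k, hk, rfl⟩ := hu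
  refine ⟨k + 1, ?_, Function.iterate_succ_apply' _ _ _⟩
  rcases (Set.mem_Iic.1 hk).lt_or_eq with hlt | rfl
  · exact hlt
  · exact absurd (iterate_parent_depth v) hur

theorem anc_subset_of_isParent {u v : V} (h : T.IsParent u v) : T.anc u ⊆ T.anc v := by
  rintro _ ⟨k, hk, rfl⟩
  have := T.depth_parent v h.1
  rw [h.2] at this
  refine ⟨k + 1, Set.mem_Iic.2 (by simp at hk; omega), ?_⟩
  simp only [Function.iterate_succ_apply, h.2]

/-- Along a path without repetitions whose first step goes down to a child, every later step
goes down to a child too: a step back up would return to the previous vertex. -/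
theorem mem_anc_last_of_isPath {N : ℕ} {a : ℕ → V} (hadj : ∀ k < N, T.Adj (a k) (a (k + 1)))
    (hinj : Set.InjOn a (Set.Iic N)) (hup : 0 < N → T.IsParent (a 0) (a 1)) :
    ∀ k ≤ N, a k ∈ T.anc (a N) := by
  induction N generalizing a with
  | zero => intro k hk; obtain rfl := Nat.le_zero.1 hk; exact T.mem_anc_self _
  | succ N ih =>
    have htail := ih (a := fun k => a (k + 1)) (fun k hk => hadj (k + 1) (by omega))
      (hinj.comp (add_left_injective 1).injOn fun k hk => by simp at hk ⊢; omega)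
      (fun hN => by
        rcases (hadj 1 (by omega)).isParent_or with h | h
        · exact h
        · have := hinj (show 2 ∈ Set.Iic (N + 1) by simp; omega)
            (show 0 ∈ Set.Iic (N + 1) by simp) (h.2.symm.trans (hup (by omega)).2)
          omega)
    rintro (_ | k) hk
    · have h0 := hup (by omega)
      rw [← h0.2]
      exact parent_mem_anc (htail 0 (Nat.zero_le _)) h0.1
    · exact htail k (by omega)

theorem mem_anc_union_of_isPath {N : ℕ} {a : ℕ → V}
    (hadj : ∀ k < N, T.Adj (a k) (a (k + 1))) (hinj : Set.InjOn a (Set.Iic N)) :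
    ∀ k ≤ N, a k ∈ T.anc (a 0) ∪ T.anc (a N) := by
  induction N generalizing a with
  | zero => intro k hk; obtain rfl := Nat.le_zero.1 hk; exact Or.inl (T.mem_anc_self _)
  | succ N ih =>
    rcases (hadj 0 (by omega)).isParent_or with h | h
    · exact fun k hk => Or.inr (mem_anc_last_of_isPath hadj hinj (fun _ => h) k hk)
    have htail := ih (a := fun k => a (k + 1)) (fun k hk => hadj (k + 1) (by omega))
      (hinj.comp (add_left_injective 1).injOn fun k hk => by simp at hk ⊢; omega)
    rintro (_ | k) hk
    · exact Or.inl (T.mem_anc_self _)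
    · exact (htail k (by omega)).imp_left fun hx => anc_subset_of_isParent h hx

variable (T) in
def hull (Γ : Type*) [SMul Γ V] : Set V := ⋃ g : Γ, T.anc (g • T.root)

theorem hull_finite (Γ : Type*) [SMul Γ V] [Finite Γ] : (T.hull Γ).Finite :=
  Set.finite_iUnion fun _ => T.anc_finite _

theorem parent_mem_hull {Γ : Type*} [SMul Γ V] {v : V} (hv : v ∈ T.hull Γ)
    (hvr : v ≠ T.root) :
    T.parent v ∈ T.hull Γ := by
  obtain ⟨g, hv⟩ := Set.mem_iUnion.1 hv
  exact Set.mem_iUnion.2 ⟨g, parent_mem_anc hv hvr⟩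

theorem root_mem_hull (Γ : Type*) [Monoid Γ] [MulAction Γ V] : T.root ∈ T.hull Γ :=
  Set.mem_iUnion.2 ⟨1, by rw [one_smul]; exact T.mem_anc_self _⟩

section Action

variable {Γ : Type*} [Group Γ] [MulAction Γ V] [MulAction Γ E]
  (hends : ∀ (g : Γ) i e, T.ends i (g • e) = g • T.ends i e)
include hends

theorem Adj.smul {u v : V} (h : T.Adj u v) (g : Γ) : T.Adj (g • u) (g • v) := by
  obtain ⟨e, i, rfl, rfl⟩ := h
  exact ⟨g • e, i, hends g i e, hends g (!i) e⟩

/-- `g` maps the path from `v` to the root to a path without repetitions from `g • v` to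
`g • root`. -/
theorem smul_mem_anc_union (g : Γ) {u v : V} (hu : u ∈ T.anc v) :
    g • u ∈ T.anc (g • v) ∪ T.anc (g • T.root) := by
  obtain ⟨k, hk, rfl⟩ := hu
  have hpath := mem_anc_union_of_isPath (T := T) (N := T.depth v)
    (a := fun j => g • T.parent^[j] v)
    (fun j hj => by
      have hpos : 0 < T.depth (T.parent^[j] v) := by rw [depth_iterate_parent v hj.le]; omega
      rw [Function.iterate_succ_apply']
      exact (IsParent.adj ⟨ne_root_of_depth_pos hpos, rfl⟩).smul hends g)
    (fun j hj k hk h => by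
      have h' := congrArg T.depth (smul_left_cancel g h)
      rw [depth_iterate_parent v hj, depth_iterate_parent v hk] at h'
      simp only [Set.mem_Iic] at hj hk
      omega)
    k hk
  simpa only [Function.iterate_zero_apply, iterate_parent_depth] using hpath

theorem smul_mem_hull (g : Γ) {v : V} (hv : v ∈ T.hull Γ) : g • v ∈ T.hull Γ := by
  obtain ⟨h, hv⟩ := Set.mem_iUnion.1 hv
  rcases smul_mem_anc_union hends g hv with hv | hv
  · exact Set.mem_iUnion.2 ⟨g * h, by rwa [mul_smul]⟩
  · exact Set.mem_iUnion.2 ⟨g, hv⟩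

end Action

variable (T) in
def edgesIn (H : Set V) : Set E := {e | ∀ i, T.ends i e ∈ H}

theorem parentEdge_image_eq_edgesIn {H : Set V}
    (hparent : ∀ v ∈ H, v ≠ T.root → T.parent v ∈ H) :
    T.parentEdge '' (H \ {T.root}) = T.edgesIn H := by
  apply subset_antisymm
  · rintro _ ⟨v, ⟨hvH, hv⟩, rfl⟩ b
    obtain ⟨i, hi, hi'⟩ := T.ends_parentEdge v hv
    cases b <;> cases i <;> simp_all
  · intro e he
    obtain ⟨v, hv, rfl⟩ := T.exists_parentEdge_eq e
    obtain ⟨i, hi, -⟩ := T.ends_parentEdge v hv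
    exact ⟨v, ⟨hi ▸ he i, hv⟩, rfl⟩

theorem edgesIn_finite {H : Set V} (hH : H.Finite)
    (hparent : ∀ v ∈ H, v ≠ T.root → T.parent v ∈ H) : (T.edgesIn H).Finite :=
  parentEdge_image_eq_edgesIn hparent ▸ hH.sdiff.image _

theorem ncard_eq_ncard_edgesIn_add_one {H : Set V} (hH : H.Finite) (hroot : T.root ∈ H)
    (hparent : ∀ v ∈ H, v ≠ T.root → T.parent v ∈ H) :
    H.ncard = (T.edgesIn H).ncard + 1 := by
  rw [← Set.ncard_sdiff_singleton_add_one hroot hH, ← parentEdge_image_eq_edgesIn hparent,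
    (parentEdge_injOn.mono fun v hv => hv.2).ncard_image]

theorem exists_fixed_vertex {p : ℕ} [Fact p.Prime] {Γ : Type*} [Group Γ] [Finite Γ]
    (hΓ : IsPGroup p Γ) [MulAction Γ V] [MulAction Γ E]
    (hends : ∀ (g : Γ) i e, T.ends i (g • e) = g • T.ends i e) :
    ∃ v : V, ∀ g : Γ, g • v = v := by
  let H : SubMulAction Γ V := ⟨T.hull Γ, fun g _ hv => smul_mem_hull hends g hv⟩
  let EH : SubMulAction Γ E := ⟨T.edgesIn (T.hull Γ), fun g e he i => by
    rw [hends]; exact H.smul_mem g (he i)⟩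
  have hparent (v : V) (hv : v ∈ T.hull Γ) (hvr : v ≠ T.root) := parent_mem_hull hv hvr
  have : Finite H := (T.hull_finite Γ).to_subtype
  have : Finite EH := (edgesIn_finite (T.hull_finite Γ) hparent).to_subtype
  have hcard : Nat.card H = Nat.card EH + 1 := by
    rw [← SetLike.coe_sort_coe, ← SetLike.coe_sort_coe, Nat.card_coe_set_eq,
      Nat.card_coe_set_eq]
    exact T.ncard_eq_ncard_edgesIn_add_one (T.hull_finite Γ) (T.root_mem_hull Γ) hparent
  rcases hΓ.exists_fixed_or_exists_fixed_of_card_eq_add_one hcard with ⟨v, hv⟩ | ⟨e, he⟩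
  · exact ⟨v, fun g => congrArg Subtype.val (hv g)⟩
  · exact ⟨T.ends true e, fun g => by
      rw [← hends]; exact congrArg (T.ends true ∘ Subtype.val) (he g)⟩

end ParentTree

theorem Monoid.CoprodI.Word.toList_equivPair_tail {ι : Type*} {M : ι → Type*}
    [∀ i, Monoid (M i)] [DecidableEq ι] [∀ i, DecidableEq (M i)] {i : ι} {w : Word M}
    (h : w.fstIdx = some i) :
    (equivPair i w).tail.toList = w.toList.tail := by
  have hw : rcons (equivPair i w) = w := (equivPair i).symm_apply_apply w
  by_cases h1 : (equivPair i w).head = 1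
  · rw [rcons, dif_pos h1] at hw
    exact absurd (by rw [hw]; exact h) (equivPair i w).fstIdx_ne
  · rw [rcons, dif_neg h1] at hw
    conv_rhs => rw [← hw]
    rfl

namespace Monoid.PushoutI

open CoprodI

section General

variable {ι C : Type*} {G : ι → Type*} [Group C] [∀ i, Group (G i)] {φ : ∀ i, C →* G i}

theorem range_base_le_range_of (i : ι) : (base φ).range ≤ (of (φ := φ) i).range := by
  rintro _ ⟨c, rfl⟩
  exact ⟨φ i c, of_apply_eq_base φ i c⟩

theorem exists_conj_mem_base_range {p : ℕ} [Fact p.Prime] {i : ι} [Finite (G i)]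
    (hφ : ∀ j, Function.Injective (φ j)) (hpC : IsPGroup p C)
    (hind : ¬ p ∣ (φ i).range.index)
    {P : Subgroup (PushoutI φ)} (hP : IsPGroup p P) {x : PushoutI φ}
    (hx : ∀ h ∈ P, x⁻¹ * h * x ∈ (of (φ := φ) i).range) :
    ∃ g : PushoutI φ, ∀ h ∈ P, g⁻¹ * h * g ∈ (base φ).range := by
  let Q := (P.map (MulAut.conj x⁻¹).toMonoidHom).comap (of (φ := φ) i)
  have hQ : IsPGroup p Q := (hP.map _).comap_of_injective _ (of_injective hφ i)
  have hS : IsPGroup p (φ i).range := hpC.of_equiv (MonoidHom.ofInjective (hφ i))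
  obtain ⟨a, ha⟩ := hS.exists_conj_mem_of_not_dvd_index hind hQ
  refine ⟨x * of i a, fun h hh => ?_⟩
  obtain ⟨q, hq⟩ := hx h hh
  have hqQ : q ∈ Q := by
    show of i q ∈ P.map _
    rw [hq]
    exact ⟨h, hh, by simp⟩
  obtain ⟨c, hc⟩ := ha q hqQ
  refine ⟨c, ?_⟩
  rw [← of_apply_eq_base φ i, hc, map_mul, map_mul, map_inv, hq]
  group

namespace NormalWord

variable [DecidableEq ι] [∀ i, DecidableEq (G i)] {d : Transversal φ}

theorem equiv_mul (x g : PushoutI φ) : equiv (d := d) (x * g) = x • equiv (d := d) g :=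
  mul_smul x g (empty : NormalWord d)

theorem prod_rcons (i : ι) (p : Pair d i) :
    (rcons i p).prod = of i p.head * ofCoprodI p.tail.prod := by
  simp only [prod, rcons, Word.equivPair_symm, Word.prod_rcons, ← of_apply_eq_base φ i,
    MonoidHom.apply_ofInjective_symm]
  rw [map_mul, ofCoprodI_of, ← mul_assoc, ← map_mul,
    Subgroup.IsComplement.equiv_fst_mul_equiv_snd]

end NormalWord

variable [DecidableEq ι] [∀ i, DecidableEq (G i)] (d : NormalWord.Transversal φ)

noncomputable def reducedWord (g : PushoutI φ) : Word G := (NormalWord.equiv (d := d) g).toWord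

noncomputable def tailAt (i : ι) (g : PushoutI φ) : Word G :=
  (NormalWord.equivPair i (NormalWord.equiv (d := d) g)).tail

theorem tailAt_eq_tail_equivPair_reducedWord (i : ι) (g : PushoutI φ) :
    tailAt d i g = (Word.equivPair i (reducedWord d g)).tail := by
  rw [tailAt, reducedWord]
  show (Word.equivPair i (CoprodI.of (φ i (NormalWord.equiv (d := d) g).head) •
    (NormalWord.equiv (d := d) g).toWord)).tail = _
  rw [Word.equivPair_smul_same]

theorem tailAt_normalized (i : ι) (g : PushoutI φ) :
    ∀ j x, ⟨j, x⟩ ∈ (tailAt d i g).toList → x ∈ d.set j :=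
  (NormalWord.equivPair i (NormalWord.equiv (d := d) g)).normalized

theorem tailAt_fstIdx_ne (i : ι) (g : PushoutI φ) : (tailAt d i g).fstIdx ≠ some i :=
  (NormalWord.equivPair i (NormalWord.equiv (d := d) g)).fstIdx_ne

theorem reducedWord_ofCoprodI_prod {w : Word G}
    (hw : ∀ j x, ⟨j, x⟩ ∈ w.toList → x ∈ d.set j) :
    reducedWord d (ofCoprodI w.prod) = w := by
  have : NormalWord.equiv (d := d) (ofCoprodI w.prod) = ⟨w, 1, hw⟩ := by
    rw [← Equiv.eq_symm_apply]
    simp [NormalWord.equiv, NormalWord.prod]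
  rw [reducedWord, this]

theorem reducedWord_base_mul (c : C) (g : PushoutI φ) :
    reducedWord d (base φ c * g) = reducedWord d g := by
  rw [reducedWord, reducedWord, NormalWord.equiv_mul, NormalWord.base_smul_def]

theorem tailAt_of_mul (i : ι) (x : G i) (g : PushoutI φ) :
    tailAt d i (of i x * g) = tailAt d i g := by
  rw [tailAt, tailAt, NormalWord.equiv_mul, NormalWord.summand_smul_def, Equiv.apply_symm_apply]

theorem exists_eq_base_mul_ofCoprodI_reducedWord (g : PushoutI φ) :
    ∃ c : C, g = base φ c * ofCoprodI (reducedWord d g).prod :=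
  ⟨_, (NormalWord.equiv.symm_apply_apply g).symm⟩

theorem exists_eq_of_mul_ofCoprodI_tailAt (i : ι) (g : PushoutI φ) :
    ∃ s : G i, g = of i s * ofCoprodI (tailAt d i g).prod := by
  refine ⟨(NormalWord.equivPair i (NormalWord.equiv (d := d) g)).head, ?_⟩
  conv_lhs => rw [← NormalWord.equiv.symm_apply_apply g,
    ← (NormalWord.equivPair i).symm_apply_apply (NormalWord.equiv (d := d) g)]
  exact NormalWord.prod_rcons i _

theorem reducedWord_inv_eq_iff {x y : PushoutI φ} :
    reducedWord d x⁻¹ = reducedWord d y⁻¹ ↔ x⁻¹ * y ∈ (base φ).range := by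
  constructor
  · intro h
    obtain ⟨s, hs⟩ := exists_eq_base_mul_ofCoprodI_reducedWord d x⁻¹
    obtain ⟨t, ht⟩ := exists_eq_base_mul_ofCoprodI_reducedWord d y⁻¹
    refine ⟨s * t⁻¹, ?_⟩
    rw [hs, ← inv_inv y, ht, h]
    simp [mul_assoc]
  · rintro ⟨s, hs⟩
    rw [show y = x * base φ s by rw [hs, mul_inv_cancel_left], mul_inv_rev, ← map_inv,
      reducedWord_base_mul]

theorem tailAt_inv_eq_iff (i : ι) {x y : PushoutI φ} :
    tailAt d i x⁻¹ = tailAt d i y⁻¹ ↔ x⁻¹ * y ∈ (of (φ := φ) i).range := by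
  constructor
  · intro h
    obtain ⟨s, hs⟩ := exists_eq_of_mul_ofCoprodI_tailAt d i x⁻¹
    obtain ⟨t, ht⟩ := exists_eq_of_mul_ofCoprodI_tailAt d i y⁻¹
    refine ⟨s * t⁻¹, ?_⟩
    rw [hs, ← inv_inv y, ht, h]
    simp [mul_assoc]
  · rintro ⟨s, hs⟩
    rw [show y = x * of i s by rw [hs, mul_inv_cancel_left], mul_inv_rev, ← map_inv,
      tailAt_of_mul]

end General

namespace BassSerre

variable {C : Type*} {G : Bool → Type*} [Group C] [∀ i, Group (G i)] {φ : ∀ i, C →* G i}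

variable (φ) in
abbrev Vertex : Type _ := Σ i : Bool, PushoutI φ ⧸ (of (φ := φ) i).range

variable (φ) in
abbrev Edge : Type _ := PushoutI φ ⧸ (base φ).range

def Edge.ends (i : Bool) (e : Edge φ) : Vertex φ :=
  ⟨i, Subgroup.quotientMapOfLE (range_base_le_range_of i) e⟩

theorem Edge.ends_smul (g : PushoutI φ) (i : Bool) (e : Edge φ) :
    (g • e).ends i = g • e.ends i := by
  induction e using QuotientGroup.induction_on with | H x => rfl

variable [∀ i, DecidableEq (G i)] (d : NormalWord.Transversal φ)

/-- The coset `x (of i).range` is recorded by the normal form of `x⁻¹` without its leading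
letter from `G i`. -/
noncomputable def vertexWord (v : Vertex φ) : Word G :=
  Quotient.liftOn' v.2 (fun x => tailAt d v.1 x⁻¹) fun _ _ h =>
    (tailAt_inv_eq_iff d v.1).2 (QuotientGroup.leftRel_apply.1 h)

noncomputable def edgeWord (e : Edge φ) : Word G :=
  Quotient.liftOn' e (fun x => reducedWord d x⁻¹) fun _ _ h =>
    (reducedWord_inv_eq_iff d).2 (QuotientGroup.leftRel_apply.1 h)

theorem vertexWord_mk (i : Bool) (x : PushoutI φ) :
    vertexWord d ⟨i, (x : PushoutI φ ⧸ (of (φ := φ) i).range)⟩ = tailAt d i x⁻¹ := rfl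

theorem edgeWord_mk (x : PushoutI φ) : edgeWord d (x : Edge φ) = reducedWord d x⁻¹ := rfl

theorem Vertex.ext_vertexWord {v w : Vertex φ} (h₁ : v.1 = w.1)
    (h₂ : vertexWord d v = vertexWord d w) : v = w := by
  obtain ⟨i, q⟩ := v
  obtain ⟨j, q'⟩ := w
  obtain rfl : i = j := h₁
  induction q using QuotientGroup.induction_on with | H x =>
  induction q' using QuotientGroup.induction_on with | H y =>
  exact congrArg _ (QuotientGroup.eq.2 ((tailAt_inv_eq_iff d i).1 h₂))

theorem edgeWord_injective : Function.Injective (edgeWord d) := by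
  intro e e' h
  induction e using QuotientGroup.induction_on with | H x =>
  induction e' using QuotientGroup.induction_on with | H y =>
  exact QuotientGroup.eq.2 ((reducedWord_inv_eq_iff d).1 h)

theorem vertexWord_fstIdx_ne (v : Vertex φ) : (vertexWord d v).fstIdx ≠ some v.1 := by
  obtain ⟨i, q⟩ := v
  induction q using QuotientGroup.induction_on with | H x =>
  exact tailAt_fstIdx_ne d i x⁻¹

theorem vertexWord_normalized (v : Vertex φ) :
    ∀ j x, ⟨j, x⟩ ∈ (vertexWord d v).toList → x ∈ d.set j := by
  obtain ⟨i, q⟩ := v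
  induction q using QuotientGroup.induction_on with | H x =>
  exact tailAt_normalized d i x⁻¹

theorem vertexWord_ends (i : Bool) (e : Edge φ) :
    vertexWord d (e.ends i) = (Word.equivPair i (edgeWord d e)).tail := by
  induction e using QuotientGroup.induction_on with | H x =>
  exact tailAt_eq_tail_equivPair_reducedWord d i x⁻¹

noncomputable def parentEdge (v : Vertex φ) : Edge φ :=
  ((ofCoprodI (vertexWord d v).prod)⁻¹ : PushoutI φ)

theorem edgeWord_parentEdge (v : Vertex φ) : edgeWord d (parentEdge d v) = vertexWord d v := by
  rw [parentEdge, edgeWord_mk, inv_inv, reducedWord_ofCoprodI_prod d (vertexWord_normalized d v)]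

theorem ends_parentEdge_self (v : Vertex φ) : (parentEdge d v).ends v.1 = v :=
  Vertex.ext_vertexWord d rfl <| by
    rw [vertexWord_ends, edgeWord_parentEdge,
      Word.equivPair_eq_of_fstIdx_ne (vertexWord_fstIdx_ne d v)]

noncomputable def parent (v : Vertex φ) : Vertex φ := (parentEdge d v).ends (!v.1)

theorem parent_fst (v : Vertex φ) : (parent d v).1 = !v.1 := rfl

theorem vertexWord_parent (v : Vertex φ) :
    vertexWord d (parent d v) = (Word.equivPair (!v.1) (vertexWord d v)).tail := by
  rw [parent, vertexWord_ends, edgeWord_parentEdge]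

variable (φ) in
def root : Vertex φ := ⟨true, ((1 : PushoutI φ) : PushoutI φ ⧸ (of (φ := φ) true).range)⟩

theorem eq_root_iff (v : Vertex φ) : v = root φ ↔ v.1 = true ∧ vertexWord d v = .empty := by
  have hroot : vertexWord d (root φ) = .empty := by
    have h1 : reducedWord d (1 : PushoutI φ) = .empty := by
      rw [reducedWord, show NormalWord.equiv (d := d) 1 = .empty from one_smul (PushoutI φ) _]
      rfl
    rw [root, vertexWord_mk, inv_one, tailAt_eq_tail_equivPair_reducedWord, h1,
      Word.equivPair_eq_of_fstIdx_ne (by simp [Word.fstIdx])]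
  constructor
  · rintro rfl
    exact ⟨rfl, hroot⟩
  · rintro ⟨h₁, h₂⟩
    exact Vertex.ext_vertexWord d h₁ (h₂.trans hroot.symm)

/-- Going to the parent deletes the first letter of the word and switches the type, and the
vertex of type `false` with the empty word is the neighbour of the root. -/
noncomputable def depth (v : Vertex φ) : ℕ :=
  (vertexWord d v).toList.length + if v.1 = (vertexWord d v).toList.length.bodd then 1 else 0

theorem depth_eq_zero_iff (v : Vertex φ) : depth d v = 0 ↔ v = root φ := by
  rw [eq_root_iff d, depth, Word.ext_iff, Word.empty_toList, ← List.length_eq_zero_iff]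
  generalize (vertexWord d v).toList.length = n
  generalize v.1 = i
  cases i <;> rcases n with _ | n <;> simp

theorem depth_parent (v : Vertex φ) (hv : v ≠ root φ) :
    depth d (parent d v) + 1 = depth d v := by
  have hfst := vertexWord_fstIdx_ne d v
  rcases h : (vertexWord d v).toList with _ | ⟨⟨j, m⟩, l⟩
  · have hv1 : v.1 = false := by
      by_contra hv1
      exact hv ((eq_root_iff d v).2 ⟨by simpa using hv1, Word.ext h⟩)
    have hpar : (vertexWord d (parent d v)).toList = [] := by
      rw [vertexWord_parent, Word.equivPair_eq_of_fstIdx_ne (by simp [Word.fstIdx, h])]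
      exact h
    simp [depth, hpar, h, hv1, parent_fst]
  · have hj : j = !v.1 := by
      have : j ≠ v.1 := fun hj => hfst (by simp [Word.fstIdx, h, hj])
      revert this
      cases j <;> cases v.1 <;> decide
    have hpar : (vertexWord d (parent d v)).toList = l := by
      rw [vertexWord_parent, Word.toList_equivPair_tail, h, List.tail_cons]
      simp [Word.fstIdx, h, hj]
    simp only [depth, hpar, h, List.length_cons, Nat.bodd_succ]
    rw [parent_fst]
    cases v.1 <;> cases l.length.bodd <;> rfl

theorem exists_parentEdge_eq (e : Edge φ) : ∃ v, v ≠ root φ ∧ parentEdge d v = e := by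
  -- the end at which the edge word loses no letter; it is not the root
  obtain ⟨i, hi, hne⟩ : ∃ i, (edgeWord d e).fstIdx ≠ some i ∧
      (i = false ∨ (edgeWord d e).toList ≠ []) := by
    rcases h : (edgeWord d e).fstIdx with _ | j
    · exact ⟨false, by simp, Or.inl rfl⟩
    · exact ⟨!j, by simp, Or.inr fun hnil => by simp [Word.fstIdx, hnil] at h⟩
  have hword : vertexWord d (e.ends i) = edgeWord d e := by
    rw [vertexWord_ends, Word.equivPair_eq_of_fstIdx_ne hi]
  refine ⟨e.ends i, fun hroot => ?_,
    edgeWord_injective d ((edgeWord_parentEdge d _).trans hword)⟩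
  obtain ⟨h1, h2⟩ := (eq_root_iff d _).1 hroot
  rw [hword] at h2
  rcases hne with rfl | hne
  · exact Bool.false_ne_true h1
  · exact hne (by rw [h2]; rfl)

noncomputable def tree : ParentTree (Vertex φ) (Edge φ) where
  ends := Edge.ends
  root := root φ
  parent := parent d
  parentEdge := parentEdge d
  depth := depth d
  depth_eq_zero_iff := depth_eq_zero_iff d
  depth_parent := depth_parent d
  ends_parentEdge v _ := ⟨v.1, ends_parentEdge_self d v, rfl⟩
  exists_parentEdge_eq := exists_parentEdge_eq d

end BassSerre

end Monoid.PushoutI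

theorem stmt_4_general {C : Type*} {G : Bool → Type*} [Group C]
    [∀ i, Group (G i)] [∀ i, Fintype (G i)]
    (p : ℕ) [Fact p.Prime]
    (φ : ∀ i, C →* G i) (hφ : ∀ i, Function.Injective (φ i))
    (hpC : IsPGroup p C) (hind : ∀ i, ¬ p ∣ (φ i).range.index)
    (P : Subgroup (PushoutI φ)) (hfin : Finite P) (hP : IsPGroup p P) :
    ∃ g : PushoutI φ,
      (fun x => g⁻¹ * x * g) '' P ⊆ Set.range (base φ) := by
  classical
  obtain ⟨d⟩ := NormalWord.transversal_nonempty φ hφ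
  obtain ⟨⟨i, q⟩, hv⟩ := (BassSerre.tree d).exists_fixed_vertex hP
    fun g i e => BassSerre.Edge.ends_smul (g : PushoutI φ) i e
  obtain ⟨x, rfl⟩ := QuotientGroup.mk_surjective q
  have hx (h : PushoutI φ) (hh : h ∈ P) : x⁻¹ * h * x ∈ (of (φ := φ) i).range := by
    have h2 := QuotientGroup.eq.1 (eq_of_heq (Sigma.mk.inj_iff.1 (hv ⟨h⁻¹, P.inv_mem hh⟩)).2)
    simpa [mul_assoc] using h2
  obtain ⟨g, hg⟩ := exists_conj_mem_base_range hφ hpC (hind i) hP hx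
  exact ⟨g, by rintro _ ⟨h, hh, rfl⟩; exact hg h hh⟩

/-- Let `G = A *_S B` be an amalgamated free product of finite groups
`A = 𝒢 true`, `B = 𝒢 false` over a common Sylow `p`-subgroup `S = C` (so `C` is a
`p`-group embedded with `p'`-index in both `A` and `B`).  Then the image of `S` in `G` is
a Sylow `p`-subgroup of `G`: every finite `p`-subgroup of `G` is conjugate to a subgroup
of it. -/
theorem stmt_4 {C : Type*} {G : Bool → Type*} [Group C] [Fintype C]
    [∀ i, Group (G i)] [∀ i, Fintype (G i)]
    (p : ℕ) [Fact p.Prime]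
    (φ : ∀ i, C →* G i) (hφ : ∀ i, Function.Injective (φ i))
    (hpC : IsPGroup p C) (hind : ∀ i, ¬ p ∣ (φ i).range.index)
    (P : Subgroup (PushoutI φ)) (hfin : Finite P) (hP : IsPGroup p P) :
    ∃ g : PushoutI φ,
      (fun x => g⁻¹ * x * g) '' P ⊆ Set.range (base φ) :=
  stmt_4_general p φ hφ hpC hind P hfin hP
end

section
/- Let G = A *_C B with A, B finite groups and C = S ∈ Syl_p(A) ∩ Syl_p(B). If X ≤ S, g ∈ G, and X^g ≤ S, then the conjugation map c_g : X → X^g can be written as a composite of conjugation maps between subgroups of S induced by elements of A and elements of B. Equivalently, the fusion system F_S(G) is generated by F_S(A) and F_S(B). -/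
/-!
Write `g = base h * w` with `w` a reduced word of the amalgam. Conjugating `x ∈ S` by the
letters of `w` one at a time never leaves `S`: if a letter `a ∈ G i` took it out, `y = a⁻¹ x a`
would lie in `G i` but not in `S`, and for the remaining tail `w'` (which does not start in
`G i`) the element `w'⁻¹ y w'` would be a nonempty reduced word, hence outside `S` by the normal
form theorem, contradicting `x ^ g ∈ S`. So `base h` followed by the letters of `w` is the
required chain.
-/

open Monoid PushoutI

namespace Monoid.CoprodI.NeWord

variable {ι : Type*} {G : ι → Type*} [∀ i, Group (G i)]

theorem mem_toList_inv {i j : ι} (w : NeWord G i j) {l : Σ i, G i} :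
    l ∈ w.inv.toList ↔ ⟨l.1, l.2⁻¹⟩ ∈ w.toList := by
  induction w with
  | singleton x _ =>
    obtain ⟨k, a⟩ := l
    simp only [inv, toList, List.mem_singleton]
    constructor <;> rintro ⟨⟩ <;> simp
  | append w₁ _ w₂ ih₁ ih₂ => simp [inv, ih₁, ih₂, or_comm]

theorem fstIdx_toWord {i j : ι} (w : NeWord G i j) : w.toWord.fstIdx = some i := by
  simp [Word.fstIdx, toWord]

end Monoid.CoprodI.NeWord

namespace Monoid.PushoutI

open CoprodI

variable {ι : Type*} {G : ι → Type*} {H : Type*} [∀ i, Group (G i)] [Group H]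
  {φ : ∀ i, H →* G i}

theorem NeWord.ofCoprodI_prod_notMem_base_range (hφ : ∀ i, Function.Injective (φ i))
    {i j : ι} (w : NeWord G i j) (hw : Reduced φ w.toWord) :
    ofCoprodI w.prod ∉ (base φ).range := fun h =>
  w.toList_ne_nil (congrArg Word.toList (hw.eq_empty_of_mem_range hφ h))

theorem of_notMem_base_range (hφ : ∀ i, Function.Injective (φ i)) {i : ι} {y : G i}
    (hy : y ∉ (φ i).range) : of i y ∉ (base φ).range := by
  have hy1 : y ≠ 1 := fun h => hy (h ▸ one_mem _)
  simpa using NeWord.ofCoprodI_prod_notMem_base_range hφ (.singleton y hy1)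
    fun _ hl => List.mem_singleton.1 hl ▸ hy

theorem conj_notMem_base_range (hφ : ∀ i, Function.Injective (φ i)) {w : Word G}
    (hw : Reduced φ w) {i : ι} (hwi : w.fstIdx ≠ some i) {y : G i} (hy : y ∉ (φ i).range) :
    (ofCoprodI w.prod)⁻¹ * of i y * ofCoprodI w.prod ∉ (base φ).range := by
  by_cases hempty : w = .empty
  · simpa [hempty] using of_notMem_base_range hφ hy
  obtain ⟨j, k, w, rfl⟩ := NeWord.of_word w hempty
  have hji : j ≠ i := fun h => hwi (h ▸ w.fstIdx_toWord)
  have hy1 : y ≠ 1 := fun h => hy (h ▸ one_mem _)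
  have hwyw := NeWord.ofCoprodI_prod_notMem_base_range hφ
    (w.inv.append hji ((NeWord.singleton y hy1).append hji.symm w)) ?_
  · simp only [NeWord.append_prod, NeWord.inv_prod, NeWord.prod_singleton, map_mul, map_inv,
      ofCoprodI_of] at hwyw
    rwa [mul_assoc]
  intro l hl
  simp only [NeWord.toWord, NeWord.toList, List.mem_append, List.mem_singleton,
    NeWord.mem_toList_inv] at hl
  rcases hl with hl | rfl | hl
  · simpa using hw _ hl
  · exact hy
  · exact hw _ hl

variable (φ) in
def letters (w : Word G) : List (PushoutI φ) :=
  w.toList.map fun l => of l.1 l.2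

theorem prod_letters (w : Word G) : (letters φ w).prod = ofCoprodI w.prod := by
  rw [letters, Word.prod, map_list_prod, List.map_map]
  rfl

theorem letters_cons {i : ι} (m : G i) (w : Word G) (hmw : w.fstIdx ≠ some i) (hm1 : m ≠ 1) :
    letters φ (Word.cons m w hmw hm1) = of i m :: letters φ w :=
  rfl

theorem conj_prod_take_letters_mem_base_range (hφ : ∀ i, Function.Injective (φ i)) {w : Word G}
    (hw : Reduced φ w) {x : PushoutI φ} (hx : x ∈ (base φ).range)
    (hwx : (ofCoprodI w.prod)⁻¹ * x * ofCoprodI w.prod ∈ (base φ).range) (k : ℕ) :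
    ((letters φ w).take k).prod⁻¹ * x * ((letters φ w).take k).prod ∈ (base φ).range := by
  induction w using Word.consRecOn generalizing x k with
  | empty => simpa [letters] using hx
  | cons i m w hmw hm1 ih =>
    obtain ⟨c, rfl⟩ := hx
    have hw' : Reduced φ w := fun l hl => hw l (List.mem_cons_of_mem _ hl)
    have hstep (t : PushoutI φ) : (of i m * t)⁻¹ * base φ c * (of i m * t) =
        t⁻¹ * ((of i m)⁻¹ * base φ c * of i m) * t := by
      group
    rw [Word.prod_cons, map_mul, ofCoprodI_of, hstep] at hwx
    have hconj : (of i m)⁻¹ * base φ c * of i m = of i (m⁻¹ * φ i c * m) := by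
      simp [of_apply_eq_base]
    obtain ⟨c', hc'⟩ : m⁻¹ * φ i c * m ∈ (φ i).range := by
      by_contra hout
      exact conj_notMem_base_range hφ hw' hmw hout (hconj ▸ hwx)
    rw [← hc', of_apply_eq_base] at hconj
    cases k with
    | zero => simp
    | succ k =>
      rw [letters_cons, List.take_succ_cons, List.prod_cons, hstep, hconj]
      exact ih hw' ⟨c', rfl⟩ (hconj ▸ hwx) k

theorem NormalWord.Transversal.eq_one_of_mem_range (d : NormalWord.Transversal φ) {i : ι}
    {a : G i} (hs : a ∈ d.set i) (hr : a ∈ (φ i).range) : a = 1 := by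
  have h₁ := (d.compl i).equiv_snd_eq_self_of_mem_of_one_mem (φ i).range.one_mem hs
  have h₂ := (d.compl i).equiv_snd_eq_one_of_mem_of_one_mem (d.one_mem i) hr
  simpa using congrArg Subtype.val (h₁.symm.trans h₂)

theorem NormalWord.reduced {d : NormalWord.Transversal φ} (n : NormalWord d) :
    Reduced φ n.toWord := fun _ hl hr =>
  n.ne_one _ hl (d.eq_one_of_mem_range (n.normalized _ _ hl) hr)

theorem exists_eq_base_mul_ofCoprodI_reduced (hφ : ∀ i, Function.Injective (φ i))
    (g : PushoutI φ) :
    ∃ (h : H) (w : Word G), Reduced φ w ∧ g = base φ h * ofCoprodI w.prod := by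
  classical
  obtain ⟨d⟩ := NormalWord.transversal_nonempty φ hφ
  let n : NormalWord d := g • .empty
  have hn : n.prod = g := by simp [n, NormalWord.prod_smul]
  exact ⟨n.head, n.toWord, n.reduced, hn.symm⟩

end Monoid.PushoutI

theorem stmt_5_general {C : Type*} {G : Bool → Type*} [Group C]
    [∀ i, Group (G i)]
    (φ : ∀ i, C →* G i) (hφ : ∀ i, Function.Injective (φ i))
    (X : Subgroup (PushoutI φ)) (hX : (X : Set (PushoutI φ)) ⊆ Set.range (base φ))
    (g : PushoutI φ) (hXg : (fun x => g⁻¹ * x * g) '' X ⊆ Set.range (base φ)) :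
    ∃ w : List (PushoutI φ),
      (∀ u ∈ w, u ∈ Set.range (of (φ := φ) true) ∪ Set.range (of (φ := φ) false)) ∧
      (∀ x ∈ X, g⁻¹ * x * g = w.prod⁻¹ * x * w.prod) ∧
      (∀ k : ℕ, k ≤ w.length →
        (fun x => (w.take k).prod⁻¹ * x * (w.take k).prod) '' X ⊆
          Set.range (base φ)) := by
  obtain ⟨h, w, hw, rfl⟩ := exists_eq_base_mul_ofCoprodI_reduced hφ g
  refine ⟨base φ h :: letters φ w, ?_, ?_, ?_⟩
  · simp only [List.mem_cons, letters, List.mem_map]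
    rintro u (rfl | ⟨⟨_ | _, a⟩, -, rfl⟩)
    · exact .inl ⟨φ true h, of_apply_eq_base φ true h⟩
    · exact .inr ⟨a, rfl⟩
    · exact .inl ⟨a, rfl⟩
  · simp [prod_letters]
  · rintro (_ | k) - _ ⟨x, hx, rfl⟩
    · simpa using hX hx
    have hconj : (base φ h)⁻¹ * x * base φ h ∈ (base φ).range := by
      obtain ⟨c, rfl⟩ := hX hx
      exact ⟨h⁻¹ * c * h, by simp⟩
    have hconj' := conj_prod_take_letters_mem_base_range hφ hw hconj
      (by simpa [mul_assoc] using hXg ⟨x, hx, rfl⟩) k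
    simpa [mul_assoc] using hconj'

/-- Let `G = A *_S B` with `A = 𝒢 true`, `B = 𝒢 false` finite groups and
`S = C` a common Sylow `p`-subgroup.  If `X ≤ S`, `g ∈ G` and `X^g ≤ S`, then the
conjugation map `c_g : X → X^g` is a composite of conjugation maps between subgroups of
`S` induced by elements of `A` and elements of `B`: there is a list `w` of elements of
`G`, each lying in (the image of) `A` or `B`, whose product induces the same conjugation
on `X` as `g`, and all intermediate conjugates of `X` under the partial products lie in
`S`.  Equivalently, `F_S(G) = ⟨F_S(A), F_S(B)⟩`. -/
theorem stmt_5 {C : Type*} {G : Bool → Type*} [Group C] [Fintype C]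
    [∀ i, Group (G i)] [∀ i, Fintype (G i)]
    (p : ℕ) [Fact p.Prime]
    (φ : ∀ i, C →* G i) (hφ : ∀ i, Function.Injective (φ i))
    (hpC : IsPGroup p C) (hind : ∀ i, ¬ p ∣ (φ i).range.index)
    (X : Subgroup (PushoutI φ)) (hX : (X : Set (PushoutI φ)) ⊆ Set.range (base φ))
    (g : PushoutI φ) (hXg : (fun x => g⁻¹ * x * g) '' X ⊆ Set.range (base φ)) :
    ∃ w : List (PushoutI φ),
      (∀ u ∈ w, u ∈ Set.range (of (φ := φ) true) ∪ Set.range (of (φ := φ) false)) ∧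
      (∀ x ∈ X, g⁻¹ * x * g = w.prod⁻¹ * x * w.prod) ∧
      (∀ k : ℕ, k ≤ w.length →
        (fun x => (w.take k).prod⁻¹ * x * (w.take k).prod) '' X ⊆
          Set.range (base φ)) :=
  stmt_5_general φ hφ X hX g hXg
end

section
/- Let G be a finite group with a Sylow p-subgroup S, and let P ≤ S. If P is fully normalized in the fusion system of G (i.e., |N_S(P)| ≥ |N_S(Q)| for every Q ≤ S that is G-conjugate to P), then Aut_S(P) = N_S(P)/C_S(P) is a Sylow p-subgroup of Aut_G(P) = N_G(P)/C_G(P). -/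
/-!
`K = N_S(P)` is a `p`-subgroup of `N_G(P)`; take a Sylow `p`-subgroup `T ≥ K` of `N_G(P)`. Some
conjugate `gTg⁻¹` lies in `S`, and then `gTg⁻¹ ≤ N_S(gPg⁻¹)` with `gPg⁻¹ ≤ S`, so full
normalization gives `|T| ≤ |K|`: `K` is Sylow in `N_G(P)`. Its image under the surjection
`N_G(P) → Aut_G(P)` is `Aut_S(P)`, and surjections map Sylow subgroups to Sylow subgroups.
-/

namespace Subgroup

variable {G : Type*} [Group G]

def IsFullyNormalized (S P : Subgroup G) : Prop :=
  ∀ g : G, P.map (MulAut.conj g).toMonoidHom ≤ S →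
    Nat.card ↥(S ⊓ normalizer (P.map (MulAut.conj g).toMonoidHom : Set G)) ≤
      Nat.card ↥(S ⊓ normalizer (P : Set G))

theorem map_rangeRestrict_eq_subgroupOf {A : Type*} [Group A] (f : G →* A) (H : Subgroup G) :
    H.map f.rangeRestrict = (H.map f).subgroupOf f.range := by
  ext x
  simp [mem_subgroupOf, mem_map, Subtype.ext_iff]

end Subgroup

open Subgroup

theorem IsPGroup.exists_map_conj_le_sylow {G : Type*} [Group G] [Finite G] {p : ℕ} [Fact p.Prime]
    {H : Subgroup G} (hH : IsPGroup p H) (S : Sylow p G) :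
    ∃ g : G, H.map (MulAut.conj g).toMonoidHom ≤ S := by
  obtain ⟨S', hHS'⟩ := hH.exists_le_sylow
  obtain ⟨g, rfl⟩ := MulAction.exists_smul_eq G S' S
  exact ⟨g, map_mono hHS'⟩

namespace Subgroup.IsFullyNormalized

variable {G : Type*} [Group G] [Finite G] {p : ℕ} [Fact p.Prime] {S : Sylow p G} {P : Subgroup G}

theorem card_le_of_isPGroup (hfn : IsFullyNormalized (S : Subgroup G) P) {T : Subgroup G}
    (hT : IsPGroup p T) (hPT : P ≤ T) (hTN : T ≤ normalizer (P : Set G)) :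
    Nat.card T ≤ Nat.card ↥((S : Subgroup G) ⊓ normalizer (P : Set G)) := by
  obtain ⟨g, hTS⟩ := hT.exists_map_conj_le_sylow S
  set c := (MulAut.conj g).toMonoidHom
  have hPS : P.map c ≤ S := (map_mono hPT).trans hTS
  have hTN' : T.map c ≤ normalizer (P.map c : Set G) := by
    rw [← map_equiv_normalizer_eq P (MulAut.conj g)]
    exact map_mono hTN
  calc Nat.card T = Nat.card (T.map c) := (card_map_of_injective (MulAut.conj g).injective).symm
    _ ≤ Nat.card ↥((S : Subgroup G) ⊓ normalizer (P.map c : Set G)) :=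
        card_le_of_le (le_inf hTS hTN')
    _ ≤ _ := hfn g hPS

theorem exists_sylow_eq_inf_normalizer (hPS : P ≤ S)
    (hfn : IsFullyNormalized (S : Subgroup G) P) :
    ∃ T : Sylow p (normalizer (P : Set G)),
      (T : Subgroup _) =
        ((S : Subgroup G) ⊓ normalizer (P : Set G)).subgroupOf (normalizer (P : Set G)) := by
  set N := normalizer (P : Set G)
  set K := (S : Subgroup G) ⊓ N
  obtain ⟨T, hKT⟩ := (S.2.to_le inf_le_left : IsPGroup p K).comap_subtype.exists_le_sylow
  refine ⟨T, (eq_of_le_of_card_ge hKT ?_).symm⟩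
  have hPT : P ≤ (T : Subgroup N).map N.subtype := fun x hx =>
    ⟨⟨x, le_normalizer hx⟩, hKT ⟨hPS hx, le_normalizer hx⟩, rfl⟩
  calc Nat.card T = Nat.card ((T : Subgroup N).map N.subtype) := (card_subtype N T).symm
    _ ≤ Nat.card K := hfn.card_le_of_isPGroup (T.2.map _) hPT (map_subtype_le _)
    _ = Nat.card (K.subgroupOf N) := by rw [← card_subtype, map_subgroupOf_eq_of_le inf_le_right]

end Subgroup.IsFullyNormalized

theorem Sylow.exists_coe_eq_map_subgroupOf_range {N A : Type*} [Group N] [Finite N] [Group A]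
    {p : ℕ} [Fact p.Prime] (f : N →* A) (T : Sylow p N) :
    ∃ Q : Sylow p f.range, (Q : Subgroup f.range) = ((T : Subgroup N).map f).subgroupOf f.range :=
  ⟨T.mapSurjective f.rangeRestrict_surjective, by
    rw [coe_mapSurjective, map_rangeRestrict_eq_subgroupOf]⟩

/-- Let `G` be a finite group with Sylow `p`-subgroup `S` and `P ≤ S`.
If `P` is fully normalized (i.e. `|N_S(P)| ≥ |N_S(Q)|` for every `G`-conjugate `Q ≤ S` of `P`),
then `Aut_S(P) = N_S(P)/C_S(P)` is a Sylow `p`-subgroup of `Aut_G(P) = N_G(P)/C_G(P)`.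
Here `Aut_G(P)` is realized as the range of the conjugation homomorphism
`N_G(P) →* MulAut P`, and `Aut_S(P)` as the range of its restriction to `N_S(P)`. -/
theorem stmt_6 {G : Type*} [Group G] [Fintype G] (p : ℕ) [Fact p.Prime]
    (S : Sylow p G) (P : Subgroup G) (hPS : P ≤ S)
    (hfn : ∀ g : G, P.map (MulAut.conj g).toMonoidHom ≤ S →
      Nat.card ↥((S : Subgroup G) ⊓ Subgroup.normalizer (P.map (MulAut.conj g).toMonoidHom : Set G)) ≤
        Nat.card ↥((S : Subgroup G) ⊓ (Subgroup.normalizer (P : Set G)))) :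
    ∃ Q : Sylow p
        ↥((MulAut.conjNormal :
            ↥(Subgroup.normalizer (P : Set G)) →* MulAut ↥(P.subgroupOf (Subgroup.normalizer (P : Set G)))).range),
      (Q : Subgroup ↥((MulAut.conjNormal :
            ↥(Subgroup.normalizer (P : Set G)) →* MulAut ↥(P.subgroupOf (Subgroup.normalizer (P : Set G)))).range)) =
        (((MulAut.conjNormal :
            ↥(Subgroup.normalizer (P : Set G)) →* MulAut ↥(P.subgroupOf (Subgroup.normalizer (P : Set G)))).comp
          (Subgroup.inclusion
            (inf_le_right : (S : Subgroup G) ⊓ (Subgroup.normalizer (P : Set G)) ≤ (Subgroup.normalizer (P : Set G))))).range).subgroupOf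
          (MulAut.conjNormal :
            ↥(Subgroup.normalizer (P : Set G)) →* MulAut ↥(P.subgroupOf (Subgroup.normalizer (P : Set G)))).range := by
  obtain ⟨T, hT⟩ := IsFullyNormalized.exists_sylow_eq_inf_normalizer hPS hfn
  obtain ⟨Q, hQ⟩ := T.exists_coe_eq_map_subgroupOf_range
    (MulAut.conjNormal : _ →* MulAut ↥(P.subgroupOf (normalizer (P : Set G))))
  refine ⟨Q, ?_⟩
  rw [hQ, hT, MonoidHom.range_comp, inclusion_range]
end

section
/- Let G be a finite group with Sylow p-subgroup S, and let P ≤ S be such that |C_S(P)| ≥ |C_S(Q)| for all G-conjugates Q ≤ S of P (P is fully centralized). Then P·C_S(P) is G-centric in S: for every g ∈ G with (P C_S(P))^g ≤ S, one has C_S((P C_S(P))^g) ≤ (P C_S(P))^g. -/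
/-!
Conjugation by `g` maps `C_S(P)` into `C_S(P^g)` as soon as `C_S(P)^g ≤ S`; full centralization
says `C_S(P^g)` is no larger, so the two are equal. For `R = P · C_S(P)` with `R^g ≤ S`, the
centralizer of `R^g` in `S` then lies in `C_S(P^g) = C_S(P)^g ≤ R^g`.
-/

/-- A subgroup `R ≤ S` is *`G`-centric in `S`* if for every `g : G` with `R^g ≤ S`,
the centralizer in `S` of `R^g` is contained in `R^g`. -/
def IsGCentric {G : Type*} [Group G] (S R : Subgroup G) : Prop :=
  ∀ g : G, R.map (MulAut.conj g).toMonoidHom ≤ S →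
    S ⊓ Subgroup.centralizer ↑(R.map (MulAut.conj g).toMonoidHom) ≤
      R.map (MulAut.conj g).toMonoidHom

namespace Subgroup

variable {G : Type*} [Group G]

theorem map_inf_centralizer_le_inf_centralizer_map {S P : Subgroup G} {f : G →* G}
    (hS : (S ⊓ centralizer P).map f ≤ S) :
    (S ⊓ centralizer P).map f ≤ S ⊓ centralizer (P.map f) := by
  refine le_inf hS ((map_mono inf_le_right).trans ?_)
  rw [coe_map]
  exact map_centralizer_le_centralizer_image _ _

theorem inf_centralizer_map_eq_of_card_le [Finite G] {S P : Subgroup G} {f : G →* G}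
    (hf : Function.Injective f) (hS : (S ⊓ centralizer P).map f ≤ S)
    (hcard : Nat.card ↥(S ⊓ centralizer (P.map f)) ≤ Nat.card ↥(S ⊓ centralizer P)) :
    S ⊓ centralizer (P.map f) = (S ⊓ centralizer P).map f :=
  (eq_of_le_of_card_ge (map_inf_centralizer_le_inf_centralizer_map hS)
    (by rwa [card_map_of_injective hf])).symm

end Subgroup

open Subgroup in
theorem stmt_7_general {G : Type*} [Group G] [Fintype G] (p : ℕ)
    (S : Sylow p G) (P : Subgroup G)
    (hfc : ∀ g : G, P.map (MulAut.conj g).toMonoidHom ≤ S →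
      Nat.card ↥((S : Subgroup G) ⊓
          Subgroup.centralizer ↑(P.map (MulAut.conj g).toMonoidHom)) ≤
        Nat.card ↥((S : Subgroup G) ⊓ Subgroup.centralizer ↑P)) :
    IsGCentric (S : Subgroup G) (P ⊔ ((S : Subgroup G) ⊓ Subgroup.centralizer ↑P)) := by
  intro g hR
  have hCgS := (map_mono le_sup_right).trans hR
  have hPgS := (map_mono le_sup_left).trans hR
  calc _ ≤ (S : Subgroup G) ⊓ centralizer ↑(P.map (MulAut.conj g).toMonoidHom) :=
        inf_le_inf_left _ (centralizer_le (map_mono le_sup_left))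
    _ = ((S : Subgroup G) ⊓ centralizer P).map (MulAut.conj g).toMonoidHom :=
        inf_centralizer_map_eq_of_card_le (MulAut.conj g).injective hCgS (hfc g hPgS)
    _ ≤ _ := map_mono le_sup_right

/-- Let `G` be a finite group with Sylow `p`-subgroup `S` and `P ≤ S` fully
centralized: `|C_S(P)| ≥ |C_S(Q)|` for every `G`-conjugate `Q ≤ S` of `P`.  Then
`P · C_S(P)` is `G`-centric in `S`. -/
theorem stmt_7 {G : Type*} [Group G] [Fintype G] (p : ℕ) [Fact p.Prime]
    (S : Sylow p G) (P : Subgroup G) (hPS : P ≤ S)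
    (hfc : ∀ g : G, P.map (MulAut.conj g).toMonoidHom ≤ S →
      Nat.card ↥((S : Subgroup G) ⊓
          Subgroup.centralizer ↑(P.map (MulAut.conj g).toMonoidHom)) ≤
        Nat.card ↥((S : Subgroup G) ⊓ Subgroup.centralizer ↑P)) :
    IsGCentric (S : Subgroup G) (P ⊔ ((S : Subgroup G) ⊓ Subgroup.centralizer ↑P)) :=
  stmt_7_general p S P hfc
end

section
/- Let a finite group K act simplicially on a tree T (without edge inversions), with T nonempty. Then the fixed-point subgraph T^K is a nonempty subtree; in particular, K fixes a vertex or an edge of T. -/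
/-!
Fix a vertex `x₀` and let `r x` be the largest distance from `x` to a point of the finite orbit
`K • x₀`. Along a path in a tree the distance to a fixed vertex has no interior local maximum, so
if two vertices are at distance at least 2, the neighbour of one of them on the path to the other
has strictly smaller `r`. Hence the minimisers of `r`, a `K`-invariant set, are pairwise at
distance at most 1. For a minimiser `c` and `k • c ≠ c`, the vertices `c`, `k • c`, `k • k • c`
would then form a triangle, as `k` inverts no edge. The fixed set is connected because each `k`
maps the unique path between two fixed vertices onto itself.
-/

open Function

namespace SimpleGraph

variable {V : Type*} {G : SimpleGraph V}

theorem IsAcyclic.mem_support_of_adj_of_dist_lt (hG : G.IsAcyclic) {y u m : V}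
    {q : G.Walk y m} (hq : q.IsPath) (hum : G.Adj u m) (hd : G.dist y u < G.dist y m) :
    u ∈ q.support := by
  classical
  by_contra hu
  have hym : G.Reachable y m := Reachable.of_dist_ne_zero (by omega)
  obtain ⟨p, hp, hpu⟩ := (hym.trans hum.symm.reachable).exists_path_of_dist
  have hm : m ∈ p.support := hG.mem_support_of_ne_mem_support_of_adj_of_isPath hp hq hum hu
  have := (dist_le (p.takeUntil m hm)).trans (p.length_takeUntil_le_length hm)
  omega

theorem IsAcyclic.eq_of_adj_of_dist_lt (hG : G.IsAcyclic) {y m u v : V} (hu : G.Adj u m)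
    (hv : G.Adj v m) (hdu : G.dist y u < G.dist y m) (hdv : G.dist y v < G.dist y m) :
    u = v := by
  have hym : G.Reachable y m := Reachable.of_dist_ne_zero (by omega)
  obtain ⟨q, hq⟩ := hym.exists_isPath
  rw [hG.eq_penultimate_of_adj_end hq hu.symm (hG.mem_support_of_adj_of_dist_lt hq hu hdu),
    hG.eq_penultimate_of_adj_end hq hv.symm (hG.mem_support_of_adj_of_dist_lt hq hv hdv)]

/-- Once a path takes a step away from `y` it keeps moving away: a vertex has at most one
neighbour closer to `y`. -/
theorem IsAcyclic.dist_eq_add_length_of_dist_snd (hG : G.IsAcyclic) (y : V) {a b : V}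
    {p : G.Walk a b} (hp : p.IsPath) (hnil : ¬p.Nil) (hsnd : G.dist y p.snd = G.dist y a + 1) :
    G.dist y b = G.dist y a + p.length := by
  induction p with
  | nil => simp at hnil
  | @cons a a₁ b h q ih =>
    rw [Walk.snd_cons] at hsnd
    rw [Walk.cons_isPath_iff] at hp
    cases q with
    | nil => simpa using hsnd
    | @cons _ a₂ _ h' q' =>
      have hreach : G.Reachable y a₁ := Reachable.of_dist_ne_zero (by omega)
      have hsnd' : G.dist y a₂ = G.dist y a₁ + 1 := by
        refine (hG.dist_eq_dist_add_one_of_adj_of_reachable y h' hreach).resolve_left fun h₂ ↦ ?_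
        have := hG.eq_of_adj_of_dist_lt (y := y) h h'.symm (by omega) (by omega)
        exact hp.2 (by simp [this])
      have := ih hp.1 (by simp) (by simpa using hsnd')
      simp only [Walk.length_cons] at this ⊢
      omega

theorem IsTree.dist_snd_lt_max (hG : G.IsTree) (y : V) {a b : V} {p : G.Walk a b}
    (hp : p.IsPath) (hlen : 2 ≤ p.length) :
    G.dist y p.snd < max (G.dist y a) (G.dist y b) := by
  have hnil : ¬p.Nil := Walk.not_nil_iff_lt_length.mpr (by omega)
  rcases hG.dist_eq_dist_add_one_of_adj y (p.adj_snd hnil) with h | h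
  · omega
  · have := hG.isAcyclic.dist_eq_add_length_of_dist_snd y hp hnil h
    omega

noncomputable def maxDistFrom {ι : Type*} (G : SimpleGraph V) (y : ι → V) (x : V) : ℕ :=
  ⨆ i, G.dist (y i) x

theorem IsTree.maxDistFrom_snd_lt_max {ι : Type*} [Finite ι] [Nonempty ι] (hG : G.IsTree)
    (y : ι → V) {a b : V} {p : G.Walk a b} (hp : p.IsPath) (hlen : 2 ≤ p.length) :
    G.maxDistFrom y p.snd < max (G.maxDistFrom y a) (G.maxDistFrom y b) := by
  obtain ⟨i, hi⟩ : ∃ i, G.dist (y i) p.snd = G.maxDistFrom y p.snd := exists_eq_ciSup_of_finite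
  have le_maxDistFrom (x : V) : G.dist (y i) x ≤ G.maxDistFrom y x :=
    le_ciSup (f := fun i ↦ G.dist (y i) x) (Set.finite_range _).bddAbove i
  have := hG.dist_snd_lt_max (y i) hp hlen
  have := le_maxDistFrom a
  have := le_maxDistFrom b
  omega

theorem IsTree.dist_le_one_of_forall_maxDistFrom_le {ι : Type*} [Finite ι] [Nonempty ι]
    (hG : G.IsTree) (y : ι → V) {a b : V} (ha : ∀ x, G.maxDistFrom y a ≤ G.maxDistFrom y x)
    (hb : ∀ x, G.maxDistFrom y b ≤ G.maxDistFrom y x) : G.dist a b ≤ 1 := by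
  by_contra! hab
  obtain ⟨p, hp, hlen⟩ := hG.connected.exists_path_of_dist a b
  have := hG.maxDistFrom_snd_lt_max y hp (by omega)
  have := ha p.snd
  have := hb p.snd
  omega

theorem IsTree.apply_eq_self_of_dist_le_one (hG : G.IsTree) (f : G →g G)
    (hf : ∀ u v, G.Adj u v → f u = v → f v ≠ u) {c : V} (h₁ : G.dist c (f c) ≤ 1)
    (h₂ : G.dist c (f (f c)) ≤ 1) : f c = c := by
  by_contra hne
  have dist_eq_one {v : V} (hv : G.dist c v ≤ 1) (hcv : c ≠ v) : G.dist c v = 1 := by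
    have := hG.connected.pos_dist_of_ne hcv
    omega
  have hd₁ := dist_eq_one h₁ (Ne.symm hne)
  have hadj : G.Adj c (f c) := dist_eq_one_iff_adj.mp hd₁
  have hd₂ := dist_eq_one h₂ (hf c (f c) hadj rfl).symm
  exact hG.dist_ne_of_adj c (f.map_adj hadj) (hd₁.trans hd₂.symm)

theorem IsAcyclic.apply_eq_self_of_mem_support (hG : G.IsAcyclic) (f : G →g G)
    (hf : Injective f) {u v : V} (hu : f u = u) (hv : f v = v) {p : G.Walk u v}
    (hp : p.IsPath) {x : V} (hx : x ∈ p.support) : f x = x := by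
  have hmap : (p.map f).copy hu hv = p := congrArg Subtype.val <|
    (hG.subsingleton_path u v).elim ⟨_, (Walk.isPath_copy _ _ _).mpr (hp.map hf)⟩ ⟨p, hp⟩
  obtain ⟨i, rfl, -⟩ := Walk.mem_support_iff_exists_getVert.mp hx
  conv_rhs => rw [← hmap]
  rw [Walk.getVert_copy, Walk.getVert_map]

theorem induce_connected_of_forall_isPath_support_subset (hG : G.Preconnected) {s : Set V}
    (hs : s.Nonempty)
    (hconvex : ∀ u ∈ s, ∀ v ∈ s, ∀ p : G.Walk u v, p.IsPath → ∀ x ∈ p.support, x ∈ s) :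
    (G.induce s).Connected := by
  obtain ⟨u, hu⟩ := hs
  refine G.induce_connected_of_patches u hu fun {v} hv ↦ ?_
  obtain ⟨p, hp⟩ := (hG u v).exists_isPath
  exact ⟨_, hconvex u hu v hv p hp, p.start_mem_support, p.end_mem_support,
    p.connected_induce_support.preconnected _ _⟩

section Action

variable {K : Type*} [Group K] [MulAction K V]

theorem dist_smul (hG : G.Preconnected)
    (hact : ∀ (k : K) (u v : V), G.Adj u v → G.Adj (k • u) (k • v)) (k : K) (u v : V) :
    G.dist (k • u) (k • v) = G.dist u v := by
  have dist_smul_le (k : K) (u v : V) : G.dist (k • u) (k • v) ≤ G.dist u v := by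
    obtain ⟨p, hp⟩ := (hG u v).exists_walk_length_eq_dist
    simpa [hp] using dist_le (p.map ⟨(k • ·), hact k _ _⟩)
  exact le_antisymm (dist_smul_le k u v) (by simpa using dist_smul_le k⁻¹ (k • u) (k • v))

theorem maxDistFrom_orbit_smul (hG : G.Preconnected)
    (hact : ∀ (k : K) (u v : V), G.Adj u v → G.Adj (k • u) (k • v)) (x₀ : V) (k : K) (x : V) :
    G.maxDistFrom (· • x₀ : K → V) (k • x) = G.maxDistFrom (· • x₀ : K → V) x := by
  unfold maxDistFrom
  rw [← (Equiv.mulLeft k).iSup_comp]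
  simp only [Equiv.coe_mulLeft, mul_smul, dist_smul hG hact]

end Action

end SimpleGraph

open SimpleGraph

/-- Let a finite group `K` act on a (possibly infinite, nonempty) tree
`T` by graph automorphisms, without edge inversions.  Then the fixed-point subgraph `T^K`
is a nonempty subtree: the set of fixed vertices is nonempty and induces a connected
subgraph of `T`.  In particular `K` fixes a vertex (or an edge) of `T`. -/
theorem stmt_13 {V : Type*} (T : SimpleGraph V) (hT : T.IsTree)
    (K : Type*) [Group K] [Finite K] [MulAction K V]
    (hact : ∀ (k : K) (u v : V), T.Adj u v → T.Adj (k • u) (k • v))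
    (hnoinv : ∀ (k : K) (u v : V), T.Adj u v → k • u = v → k • v ≠ u) :
    ({v : V | ∀ k : K, k • v = v}).Nonempty ∧
      (T.induce {v : V | ∀ k : K, k • v = v}).Connected := by
  have : Nonempty V := hT.connected.nonempty
  obtain ⟨x₀⟩ := hT.connected.nonempty
  let f (k : K) : T →g T := ⟨(k • ·), hact k _ _⟩
  let r := T.maxDistFrom (· • x₀ : K → V)
  let c := argmin r
  have hmin (k : K) (x : V) : r (k • c) ≤ r x :=
    (maxDistFrom_orbit_smul hT.connected.preconnected hact x₀ k c).trans_le (argmin_le r x)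
  have hfix (k : K) : k • c = c := by
    have hmin' (x : V) : r (k • k • c) ≤ r x := by simpa [mul_smul] using hmin (k * k) x
    exact hT.apply_eq_self_of_dist_le_one (f k) (hnoinv k)
      (hT.dist_le_one_of_forall_maxDistFrom_le _ (argmin_le r ·) (hmin k))
      (hT.dist_le_one_of_forall_maxDistFrom_le _ (argmin_le r ·) hmin')
  refine ⟨⟨c, hfix⟩, induce_connected_of_forall_isPath_support_subset
    hT.connected.preconnected ⟨c, hfix⟩ fun u hu v hv p hp x hx k ↦ ?_⟩
  exact hT.isAcyclic.apply_eq_self_of_mem_support (f k) (MulAction.injective k) (hu k) (hv k) hp hx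
end

section
/- Let (T, 𝒢) be a tree of finite groups with completion G, fix a vertex v_* and a subgroup P ≤ 𝒢(v_*). Then there is an isomorphism of graphs T̃^P / C_G(P) ≅ Rep_G(P, 𝒢), sending the orbit of a vertex g𝒢(v) of the fixed-point subtree T̃^P to the class [c_g] of the conjugation homomorphism c_g : P → 𝒢(v), modulo inner automorphisms of 𝒢(v) (and similarly on edges). -/
section BassSerre

variable {V : Type*} (T : SimpleGraph V) {G : Type*} [Group G] (𝒢 : V → Subgroup G)

/-- The Bass–Serre graph of a tree of groups realized inside its completion `G`. -/
def BassSerre : SimpleGraph ((v : V) × (G ⧸ 𝒢 v)) where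
  Adj x y := T.Adj x.1 y.1 ∧ ∃ i : G,
    (QuotientGroup.mk i : G ⧸ 𝒢 x.1) = x.2 ∧ (QuotientGroup.mk i : G ⧸ 𝒢 y.1) = y.2
  symm := by constructor; rintro x y ⟨h, i, h1, h2⟩; exact ⟨h.symm, i, h2, h1⟩
  loopless := by constructor; rintro x ⟨h, -⟩; exact T.loopless.irrefl _ h

variable (P : Subgroup G)

/-- The vertices (and implicitly edges) of the fixed-point subtree `T̃^P`: cosets fixed
under left multiplication by `P`. -/
abbrev FixedVert : Type _ :=
  {x : (v : V) × (G ⧸ 𝒢 v) // ∀ g ∈ P, g • x.2 = x.2}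

/-- The orbit relation of the centralizer `C_G(P)` acting on `T̃^P`. -/
def centRel (x y : FixedVert 𝒢 P) : Prop :=
  ∃ z ∈ Subgroup.centralizer (P : Set G), y.1 = ⟨x.1.1, z • x.1.2⟩

/-- Adjacency on the quotient graph `T̃^P / C_G(P)`. -/
def quotAdj (c d : Quot (centRel 𝒢 P)) : Prop :=
  ∃ x y : FixedVert 𝒢 P, Quot.mk _ x = c ∧ Quot.mk _ y = d ∧
    (BassSerre T 𝒢).Adj x.1 y.1

/-- `Hom_G(P, 𝒢 v)`: elements `g : G` with `P^g ≤ 𝒢 v`, representing the conjugation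
homomorphisms `c_g : P → 𝒢 v`. -/
abbrev HomSet (v : V) : Type _ :=
  {g : G // ∀ x ∈ P, g⁻¹ * x * g ∈ 𝒢 v}

/-- Two conjugation homomorphisms `c_g, c_g' : P → 𝒢 v` give the same class in
`Rep_G(P, 𝒢 v)` iff they differ by an inner automorphism of `𝒢 v`, i.e.
`g' = z g r` with `z ∈ C_G(P)` and `r ∈ 𝒢 v`. -/
def repRel (v : V) (g g' : HomSet 𝒢 P v) : Prop :=
  ∃ z ∈ Subgroup.centralizer (P : Set G), ∃ r ∈ 𝒢 v, (g'.val : G) = z * g.val * r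

/-- The vertex set of the graph `Rep_G(P, 𝒢)`: the disjoint union of the
`Rep_G(P, 𝒢 v)`. -/
abbrev RepVert : Type _ :=
  (v : V) × Quot (repRel 𝒢 P v)

/-- Adjacency in `Rep_G(P, 𝒢)`: two classes are joined by an edge `[c_i]_{𝒢 e}`,
`𝒢 e = 𝒢 v ⊓ 𝒢 w`, iff `v, w` are adjacent in `T` and a single `i : G` with
`P^i ≤ 𝒢 v ⊓ 𝒢 w` represents both. -/
def repAdj (c d : RepVert 𝒢 P) : Prop :=
  T.Adj c.1 d.1 ∧ ∃ (gi : HomSet 𝒢 P c.1) (gj : HomSet 𝒢 P d.1),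
    (gi.val : G) = gj.val ∧ Quot.mk _ gi = c.2 ∧ Quot.mk _ gj = d.2


/-! A `P`-fixed coset `g𝒢(v)` is exactly one with `P^g ≤ 𝒢(v)`, and translating it by
`z ∈ C_G(P)` replaces `c_g` by `c_{zg}`, which is the same homomorphism; conversely two
representatives `g, g'` of the same coset differ on the right by `𝒢(v)`, i.e. by an inner
automorphism of `𝒢(v)`. Hence `[c_g] ↦ C_G(P) · g𝒢(v)` is a well-defined bijection
`Rep_G(P, 𝒢) → T̃^P / C_G(P)`, and an edge `g𝒢(e)` of `T̃^P` corresponds to a single `g`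
representing both endpoint classes. -/

section FixedCosets

variable {G : Type*} [Group G]

theorem smul_mk_eq_mk_iff_conj_mem (H : Subgroup G) (x g : G) :
    x • (g : G ⧸ H) = g ↔ g⁻¹ * x * g ∈ H := by
  rw [MulAction.Quotient.smul_mk, QuotientGroup.eq, ← inv_mem_iff]
  simp [mul_assoc]

theorem fixed_iff_conj_mem (P H : Subgroup G) (g : G) :
    (∀ x ∈ P, x • (g : G ⧸ H) = g) ↔ ∀ x ∈ P, g⁻¹ * x * g ∈ H := by
  simp only [smul_mk_eq_mk_iff_conj_mem]

end FixedCosets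

section RepGraph

variable {V : Type*} {G : Type*} [Group G] (𝒢 : V → Subgroup G) (P : Subgroup G)

def fixedVertOfHom (v : V) (g : HomSet 𝒢 P v) : FixedVert 𝒢 P :=
  ⟨⟨v, g.val⟩, (fixed_iff_conj_mem P (𝒢 v) g.val).mpr g.2⟩

theorem centRel_equivalence : Equivalence (centRel 𝒢 P) where
  refl _ := ⟨1, one_mem _, by simp⟩
  symm := by
    rintro ⟨⟨v, c⟩, -⟩ ⟨y, -⟩ ⟨z, hz, rfl⟩
    exact ⟨z⁻¹, inv_mem hz, by simp⟩
  trans := by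
    rintro ⟨⟨v, c⟩, -⟩ ⟨y, -⟩ ⟨w, -⟩ ⟨z, hz, rfl⟩ ⟨z', hz', rfl⟩
    exact ⟨z' * z, mul_mem hz' hz, by simp [mul_smul]⟩

def orbitOfRep (a : RepVert 𝒢 P) : Quot (centRel 𝒢 P) :=
  Quot.lift (fun g => Quot.mk _ (fixedVertOfHom 𝒢 P a.1 g))
    (by
      rintro g g' ⟨z, hz, r, hr, hg'⟩
      refine Quot.sound ⟨z, hz, ?_⟩
      simp only [fixedVertOfHom, hg', QuotientGroup.mk_mul_of_mem _ hr]
      rfl)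
    a.2

theorem orbitOfRep_injective : Function.Injective (orbitOfRep 𝒢 P) := by
  rintro ⟨v, q⟩ ⟨w, q'⟩ h
  induction q using Quot.ind with | mk g => ?_
  induction q' using Quot.ind with | mk g' => ?_
  obtain ⟨z, hz, hzg⟩ := (centRel_equivalence 𝒢 P).eqvGen_iff.mp (Quot.eq.mp h)
  obtain ⟨rfl, hzg⟩ := Sigma.mk.inj_iff.mp hzg
  have hr : g'.val⁻¹ * (z * g.val) ∈ 𝒢 _ := QuotientGroup.eq.mp (eq_of_heq hzg)
  exact congrArg (Sigma.mk _) (Quot.sound ⟨z, hz, _, inv_mem hr, by group⟩)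

theorem mk_eq_orbitOfRep (v : V) (g : G) (hg : ∀ x ∈ P, x • (g : G ⧸ 𝒢 v) = g) :
    Quot.mk _ (⟨⟨v, g⟩, hg⟩ : FixedVert 𝒢 P) =
      orbitOfRep 𝒢 P ⟨v, Quot.mk _ ⟨g, (fixed_iff_conj_mem P (𝒢 v) g).mp hg⟩⟩ :=
  rfl

theorem orbitOfRep_surjective : Function.Surjective (orbitOfRep 𝒢 P) := by
  rintro ⟨⟨⟨v, c⟩, hc⟩⟩
  induction c using QuotientGroup.induction_on
  exact ⟨_, (mk_eq_orbitOfRep 𝒢 P _ _ hc).symm⟩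

theorem quotAdj_orbitOfRep_iff (T : SimpleGraph V) (a b : RepVert 𝒢 P) :
    quotAdj T 𝒢 P (orbitOfRep 𝒢 P a) (orbitOfRep 𝒢 P b) ↔ repAdj T 𝒢 P a b := by
  obtain ⟨v, ⟨p⟩⟩ := a
  obtain ⟨w, ⟨q⟩⟩ := b
  constructor
  · rintro ⟨⟨⟨v', c⟩, hc⟩, ⟨⟨w', d⟩, hd⟩, hx, hy, hxy, i, hic, hid⟩
    dsimp only at hic hid
    subst c d
    rw [mk_eq_orbitOfRep] at hx hy
    obtain ⟨rfl, hp⟩ := Sigma.mk.inj_iff.mp (orbitOfRep_injective 𝒢 P hx)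
    obtain ⟨rfl, hq⟩ := Sigma.mk.inj_iff.mp (orbitOfRep_injective 𝒢 P hy)
    exact ⟨hxy, _, _, rfl, eq_of_heq hp, eq_of_heq hq⟩
  · rintro ⟨hvw, p', q', hpq, hp, hq⟩
    refine ⟨fixedVertOfHom 𝒢 P v p', fixedVertOfHom 𝒢 P w q', ?_, ?_, hvw, p'.val, rfl,
      congrArg _ hpq⟩
    · exact congrArg (fun c => orbitOfRep 𝒢 P ⟨v, c⟩) hp
    · exact congrArg (fun c => orbitOfRep 𝒢 P ⟨w, c⟩) hq

end RepGraph

theorem stmt_15_general {V : Type} (T : SimpleGraph V)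
    (G : Type) [Group G] (𝒢 : V → Subgroup G) (P : Subgroup G) :
    ∃ e : Quot (centRel 𝒢 P) ≃ RepVert 𝒢 P,
      (∀ (v : V) (g : G)
        (hfix : ∀ x ∈ P, x • (QuotientGroup.mk g : G ⧸ 𝒢 v) = QuotientGroup.mk g)
        (h2 : ∀ x ∈ P, g⁻¹ * x * g ∈ 𝒢 v),
        e (Quot.mk _ (⟨⟨v, QuotientGroup.mk g⟩, hfix⟩ : FixedVert 𝒢 P)) =
          ⟨v, Quot.mk _ (⟨g, h2⟩ : HomSet 𝒢 P v)⟩) ∧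
      (∀ c d : Quot (centRel 𝒢 P), quotAdj T 𝒢 P c d ↔ repAdj T 𝒢 P (e c) (e d)) := by
  have bij : Function.Bijective (orbitOfRep 𝒢 P) :=
    ⟨orbitOfRep_injective 𝒢 P, orbitOfRep_surjective 𝒢 P⟩
  refine ⟨(Equiv.ofBijective _ bij).symm, fun v g hfix h2 => ?_, fun c d => ?_⟩
  · exact (Equiv.ofBijective _ bij).symm_apply_eq.mpr rfl
  · rw [← quotAdj_orbitOfRep_iff, Equiv.ofBijective_apply_symm_apply _ bij,
      Equiv.ofBijective_apply_symm_apply _ bij]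

/-- Let `(T, 𝒢)` be a tree of finite groups with completion `G`
(vertex groups finite, generating `G`, with the colimit universal property), fix a vertex
`v⋆` and a subgroup `P ≤ 𝒢 v⋆`.  Then there is an isomorphism of graphs
`T̃^P / C_G(P) ≅ Rep_G(P, 𝒢)` sending the `C_G(P)`-orbit of a fixed vertex `g𝒢(v)` of
the Bass–Serre tree to the class `[c_g]` of the conjugation homomorphism
`c_g : P → 𝒢 v` modulo inner automorphisms of `𝒢 v` (and similarly on edges). -/
theorem stmt_15 {V : Type} [Fintype V] (T : SimpleGraph V) (hT : T.IsTree)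
    (G : Type) [Group G] (𝒢 : V → Subgroup G) (hfin : ∀ v, Finite (𝒢 v))
    (hgen : (⨆ v, 𝒢 v) = ⊤)
    (huniv : ∀ (H : Type) [Group H] (f : ∀ v, ↥(𝒢 v) →* H),
      (∀ v w, T.Adj v w → ∀ (x : G) (hv : x ∈ 𝒢 v) (hw : x ∈ 𝒢 w),
        f v ⟨x, hv⟩ = f w ⟨x, hw⟩) →
      ∃ F : G →* H, ∀ (v : V) (x : ↥(𝒢 v)), F ↑x = f v x)
    (vstar : V) (P : Subgroup G) (hP : P ≤ 𝒢 vstar) :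
    ∃ e : Quot (centRel 𝒢 P) ≃ RepVert 𝒢 P,
      (∀ (v : V) (g : G)
        (hfix : ∀ x ∈ P, x • (QuotientGroup.mk g : G ⧸ 𝒢 v) = QuotientGroup.mk g)
        (h2 : ∀ x ∈ P, g⁻¹ * x * g ∈ 𝒢 v),
        e (Quot.mk _ (⟨⟨v, QuotientGroup.mk g⟩, hfix⟩ : FixedVert 𝒢 P)) =
          ⟨v, Quot.mk _ (⟨g, h2⟩ : HomSet 𝒢 P v)⟩) ∧
      (∀ c d : Quot (centRel 𝒢 P), quotAdj T 𝒢 P c d ↔ repAdj T 𝒢 P (e c) (e d)) :=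
  stmt_15_general T G 𝒢 P
end BassSerre
end

section
/- Let G be a finite group and S a Sylow p-subgroup of G. For any finite p-group P, the map sending the class of α ∈ Hom(P, S) modulo postcomposition by G-conjugation-isomorphisms between subgroups of S, to the class of α ∘ ι_S^G in Hom(P, G)/Inn(G), is a well-defined bijection Rep(P, F_S(G)) → Rep(P, G). -/
/-!
Every `p`-subgroup of `G` is contained in a Sylow `p`-subgroup, and all Sylow `p`-subgroups are
conjugate, so every homomorphism from a `p`-group into `G` is `G`-conjugate to one landing in `S`:
this gives surjectivity. Injectivity is immediate, because the relation defining `Rep(P, F_S(G))`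
is the restriction of the one defining `Rep(P, G)` to homomorphisms into `S`.
-/

variable (P G : Type*) [Group P] [Group G]

/-- `Rep(P, G)`: homomorphisms `P →* G` modulo postcomposition with inner automorphisms
of `G`. -/
def RepOfGroup : Type _ :=
  Quot (fun α β : P →* G => ∃ g : G, ∀ x : P, β x = g * α x * g⁻¹)

/-- `Rep(P, F_S(G))` for `S ≤ G`: homomorphisms `P →* S` modulo postcomposition with
isomorphisms between subgroups of `S` induced by conjugation in `G`. -/
def RepOfFusion (S : Subgroup G) : Type _ :=
  Quot (fun α β : P →* ↥S => ∃ g : G, ∀ x : P, (β x : G) = g * (α x : G) * g⁻¹)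

section

variable {P G}

theorem conjRel_equivalence :
    Equivalence (fun α β : P →* G => ∃ g : G, ∀ x : P, β x = g * α x * g⁻¹) where
  refl _ := ⟨1, fun x => by group⟩
  symm := fun ⟨g, hg⟩ => ⟨g⁻¹, fun x => by rw [hg x]; group⟩
  trans := fun ⟨g, hg⟩ ⟨h, hh⟩ => ⟨h * g, fun x => by rw [hh x, hg x]; group⟩

theorem RepOfGroup.mk_eq_mk_iff {α β : P →* G} :
    (Quot.mk _ α : RepOfGroup P G) = Quot.mk _ β ↔ ∃ g : G, ∀ x : P, β x = g * α x * g⁻¹ :=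
  Quot.eq.trans conjRel_equivalence.eqvGen_iff

def RepOfFusion.toRepOfGroup (S : Subgroup G) : RepOfFusion P G S → RepOfGroup P G :=
  Quot.lift (fun α => Quot.mk _ (S.subtype.comp α)) fun _ _ ⟨g, hg⟩ => Quot.sound ⟨g, hg⟩

theorem RepOfFusion.toRepOfGroup_injective (S : Subgroup G) :
    Function.Injective (RepOfFusion.toRepOfGroup (P := P) S) := by
  rintro ⟨α⟩ ⟨β⟩ h
  obtain ⟨g, hg⟩ := RepOfGroup.mk_eq_mk_iff.mp h
  exact Quot.sound ⟨g, hg⟩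

theorem IsPGroup.exists_conj_mem_sylow {p : ℕ} [Fact p.Prime] [Finite (Sylow p G)]
    (hP : IsPGroup p P) (φ : P →* G) (S : Sylow p G) : ∃ g : G, ∀ x : P, g * φ x * g⁻¹ ∈ S := by
  obtain ⟨T, hT⟩ := (hP.of_surjective φ.rangeRestrict φ.rangeRestrict_surjective).exists_le_sylow
  obtain ⟨g, rfl⟩ := MulAction.exists_smul_eq G T S
  refine ⟨g, fun x => ?_⟩
  rw [← SetLike.mem_coe, ← Sylow.coe_coe, Sylow.coe_subgroup_smul, SetLike.mem_coe]
  exact Subgroup.smul_mem_pointwise_smul _ (MulAut.conj g) _ (hT ⟨x, rfl⟩)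

theorem RepOfFusion.toRepOfGroup_surjective {p : ℕ} [Fact p.Prime] [Finite (Sylow p G)]
    (hP : IsPGroup p P) (S : Sylow p G) :
    Function.Surjective (RepOfFusion.toRepOfGroup (P := P) (S : Subgroup G)) := by
  rintro ⟨φ⟩
  obtain ⟨g, hg⟩ := hP.exists_conj_mem_sylow φ S
  refine ⟨Quot.mk _ (((MulAut.conj g).toMonoidHom.comp φ).codRestrict _ hg), ?_⟩
  exact Quot.sound ⟨g⁻¹, fun x => by
    change φ x = g⁻¹ * (g * φ x * g⁻¹) * g⁻¹⁻¹
    group⟩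

end

theorem stmt_16_general {G : Type*} [Group G] [Fintype G] (p : ℕ) [Fact p.Prime]
    (S : Sylow p G) (P : Type*) [Group P] (hP : IsPGroup p P) :
    ∃ F : RepOfFusion P G (S : Subgroup G) ≃ RepOfGroup P G,
      ∀ α : P →* ↥(S : Subgroup G),
        F (Quot.mk _ α) = Quot.mk _ (((S : Subgroup G).subtype).comp α) :=
  ⟨Equiv.ofBijective _ ⟨RepOfFusion.toRepOfGroup_injective _,
    RepOfFusion.toRepOfGroup_surjective hP S⟩, fun _ => rfl⟩

/-- Let `G` be a finite group, `S` a Sylow `p`-subgroup, `P` a finite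
`p`-group.  The map `Rep(P, F_S(G)) → Rep(P, G)` sending the class of `α : P →* S` to the
class of `ι_S^G ∘ α` is a well-defined bijection. -/
theorem stmt_16 {G : Type*} [Group G] [Fintype G] (p : ℕ) [Fact p.Prime]
    (S : Sylow p G) (P : Type*) [Group P] [Fintype P] (hP : IsPGroup p P) :
    ∃ F : RepOfFusion P G (S : Subgroup G) ≃ RepOfGroup P G,
      ∀ α : P →* ↥(S : Subgroup G),
        F (Quot.mk _ α) = Quot.mk _ (((S : Subgroup G).subtype).comp α) :=
  stmt_16_general p S P hP
end

section
/- Let G be a finite group with Sylow p-subgroup S and let Q ⊴ G be a normal p-subgroup (so Q ≤ S). Then Q is contained in every subgroup R ≤ S such that R is G-centric in S and O_p(N_G(R)/(R·C_G(R))) is trivial (i.e., R is radical and centric for the fusion of G on S). -/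
open Subgroup

theorem IsGCentric.inf_centralizer_le {G : Type*} [Group G] {S R : Subgroup G}
    (h : IsGCentric S R) (hRS : R ≤ S) : S ⊓ centralizer (R : Set G) ≤ R := by
  have hmap : R.map (MulAut.conj (1 : G)).toMonoidHom = R := by
    ext
    simp
  simpa only [hmap] using h 1 (hmap.symm ▸ hRS)

theorem IsPGroup.exists_relIndex_sup_eq_pow {G : Type*} [Group G] {p : ℕ} [Fact p.Prime]
    {H K : Subgroup G} [Finite K] (hK : IsPGroup p K) (hKH : K ≤ normalizer (H : Set G)) :
    ∃ n : ℕ, H.relIndex (H ⊔ K) = p ^ n := by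
  have hHK : H.relIndex (H ⊔ K) = H.relIndex K := by
    rw [← relIndex_subgroupOf (sup_le le_normalizer hKH), subgroupOf_sup le_normalizer hKH,
      relIndex_sup_left, relIndex_subgroupOf hKH]
  obtain ⟨m, hm⟩ := IsPGroup.iff_card.mp hK
  obtain ⟨n, -, hn⟩ := (Nat.dvd_prime_pow Fact.out).mp (hm ▸ relIndex_dvd_card H K)
  exact ⟨n, hHK.trans hn⟩

namespace Subgroup

variable {G : Type*} [Group G]

theorem normalizer_le_normalizer_centralizer (R : Subgroup G) :
    normalizer (R : Set G) ≤ normalizer (centralizer (R : Set G) : Set G) :=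
  le_normalizer_of_normal_subgroupOf (centralizer_le_normalizer _)

theorem normalizer_le_normalizer_sup_centralizer (R : Subgroup G) :
    normalizer (R : Set G) ≤ normalizer ((R ⊔ centralizer (R : Set G) : Subgroup G) : Set G) :=
  normalizer_le_normalizer_sup_of_normalizer_le_left (normalizer_le_normalizer_centralizer R)

theorem inf_sup_centralizer_le {S R : Subgroup G} (hRS : R ≤ S)
    (h : S ⊓ centralizer (R : Set G) ≤ R) : S ⊓ (R ⊔ centralizer (R : Set G)) ≤ R := by
  rintro x ⟨hxS, hx⟩
  obtain ⟨r, hr, c, hc, rfl⟩ := (coe_mul_of_left_le_normalizer_right _ _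
    (le_normalizer.trans (normalizer_le_normalizer_centralizer R))).subset hx
  have hcS : c ∈ S := by simpa using mul_mem (inv_mem (hRS hr)) hxS
  exact mul_mem hr (h ⟨hcS, hc⟩)

theorem le_of_inf_normalizer_le {Q R : Subgroup G} [Q.Normal]
    [Group.IsNilpotent (Q ⊔ R : Subgroup G)] (h : Q ⊓ normalizer (R : Set G) ≤ R) :
    Q ≤ R := by
  have hself : normalizer (R.subgroupOf (Q ⊔ R) : Set (Q ⊔ R : Subgroup G)) ≤
      R.subgroupOf (Q ⊔ R) := by
    rw [← subgroupOf_normalizer_eq le_sup_right]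
    intro x hx
    rw [mem_subgroupOf] at hx ⊢
    obtain ⟨q, hq, r, hr, hqr⟩ := (normal_mul Q R).subset x.2
    have hqN : q ∈ normalizer (R : Set G) := by
      rw [eq_mul_inv_of_mul_eq hqr]
      exact mul_mem hx (inv_mem (le_normalizer hr))
    rw [← hqr]
    exact mul_mem (h ⟨hq, hqN⟩) hr
  have htop : R.subgroupOf (Q ⊔ R) = ⊤ :=
    normalizerCondition_iff_only_full_group_self_normalizing.mp
      Group.normalizerCondition_of_isNilpotent _ (le_antisymm hself le_normalizer)
  exact le_sup_left.trans (subgroupOf_eq_top.mp htop)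

/-- `O_p(N_G(R) / R C_G(R)) = 1`, phrased through the correspondence theorem: a normal
`p`-subgroup of the quotient is `U / R C_G(R)` for some `U ⊴ N_G(R)` containing `R C_G(R)`. -/
def IsRadical (p : ℕ) (R : Subgroup G) : Prop :=
  ∀ U : Subgroup G,
    R ⊔ centralizer ↑R ≤ U → U ≤ normalizer (R : Set G) →
    (U.subgroupOf (normalizer (R : Set G))).Normal →
    (∃ n : ℕ, ((R ⊔ centralizer ↑R).subgroupOf U).index = p ^ n) →
    U = R ⊔ centralizer ↑R

theorem IsRadical.le_sup_centralizer {p : ℕ} [Fact p.Prime] {R P : Subgroup G}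
    (hR : R.IsRadical p) [Finite P] (hP : IsPGroup p P) (hPN : P ≤ normalizer (R : Set G))
    (hNP : normalizer (R : Set G) ≤ normalizer (P : Set G)) :
    P ≤ R ⊔ centralizer (R : Set G) := by
  have hRC : R ⊔ centralizer (R : Set G) ≤ normalizer (R : Set G) :=
    sup_le le_normalizer (centralizer_le_normalizer _)
  have hNRC := normalizer_le_normalizer_sup_centralizer R
  have hU := hR _ le_sup_left (sup_le hRC hPN)
    ((normal_subgroupOf_iff_le_normalizer (sup_le hRC hPN)).mpr
      ((le_inf hNRC hNP).trans (normalizer_inf_normalizer_le_normalizer_sup _ _)))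
    (hP.exists_relIndex_sup_eq_pow (hPN.trans hNRC))
  exact le_sup_right.trans hU.le

end Subgroup

/-- Let `G` be a finite group with Sylow `p`-subgroup `S` and `Q ⊴ G` a
normal `p`-subgroup with `Q ≤ S`.  Then `Q` is contained in every `R ≤ S` which is
`G`-centric and radical, i.e. such that `O_p(N_G(R)/(R·C_G(R)))` is trivial.  The radical
condition is expressed via the correspondence between normal `p`-subgroups of the quotient
`N_G(R)/(R·C_G(R))` and normal subgroups `U` of `N_G(R)` containing `R·C_G(R)` with
`U/(R·C_G(R))` of `p`-power order. -/
theorem stmt_18 {G : Type*} [Group G] [Fintype G] (p : ℕ) [Fact p.Prime]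
    (S : Sylow p G) (Q : Subgroup G) [Q.Normal] (hQp : IsPGroup p Q)
    (hQS : Q ≤ S) (R : Subgroup G) (hRS : R ≤ S)
    (hcent : IsGCentric (S : Subgroup G) R)
    (hrad : ∀ U : Subgroup G,
      R ⊔ Subgroup.centralizer ↑R ≤ U → U ≤ (Subgroup.normalizer (R : Set G)) →
      (U.subgroupOf (Subgroup.normalizer (R : Set G))).Normal →
      (∃ n : ℕ, ((R ⊔ Subgroup.centralizer ↑R).subgroupOf U).index = p ^ n) →
      U = R ⊔ Subgroup.centralizer ↑R) :
    Q ≤ R := by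
  have hQN_RC : Q ⊓ normalizer (R : Set G) ≤ R ⊔ centralizer (R : Set G) :=
    IsRadical.le_sup_centralizer hrad hQp.to_inf_left inf_le_right
      ((le_inf le_normalizer_of_normal le_normalizer).trans inf_normalizer_le_normalizer_inf)
  have hQN_R : Q ⊓ normalizer (R : Set G) ≤ R :=
    (le_inf (inf_le_left.trans hQS) hQN_RC).trans
      (inf_sup_centralizer_le hRS (hcent.inf_centralizer_le hRS))
  have : Group.IsNilpotent (Q ⊔ R : Subgroup G) :=
    (S.isPGroup'.to_le (sup_le hQS hRS)).isNilpotent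
  exact le_of_inf_normalizer_le hQN_R
end
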